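/- arXiv:2311.07680 — 9 statements merged into one kernel-verified Lean document; each statement's English description precedes it below -/
import Mathlib

section
/- If 1/n ≤ t ≤ 1/(n-1), then every p ∈ R^n with Σᵢ pᵢ = 1 and p·p ≤ t has all coordinates nonnegative; hence P(t) = E_t. -/
/-- If `1/n ≤ t ≤ 1/(n-1)` (with `n ≥ 2`), then every `p ∈ ℝⁿ` with `∑ᵢ pᵢ = 1` and
`p·p ≤ t` has all coordinates nonnegative; hence `P(t) = E_t`. -/
theorem stmt_8 {n : ℕ} (hn : 2 ≤ n) (t : ℝ)
    (ht1 : 1 / (n : ℝ) ≤ t) (ht2 : t ≤ 1 / ((n : ℝ) - 1)) :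
    (∀ p : Fin n → ℝ, ∑ i, p i = 1 → ∑ i, p i * p i ≤ t → ∀ i, 0 ≤ p i) ∧
      {p : Fin n → ℝ | (∀ i, 0 ≤ p i) ∧ ∑ i, p i = 1 ∧ ∑ i, p i * p i ≤ t} =
        {p : Fin n → ℝ | ∑ i, p i = 1 ∧ ∑ i, p i * p i ≤ t} := by
  have hn1 : (1:ℝ) ≤ (n:ℝ) - 1 := by
    have : (2:ℝ) ≤ (n:ℝ) := by exact_mod_cast hn
    linarith
  have hmain : ∀ p : Fin n → ℝ, ∑ i, p i = 1 → ∑ i, p i * p i ≤ t → ∀ i, 0 ≤ p i := by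
    intro p hsum hsq i
    have h1 : ∑ j ∈ Finset.univ.erase i, p j = 1 - p i := by
      have := Finset.sum_erase_add Finset.univ p (Finset.mem_univ i)
      linarith [hsum ▸ this]
    have h2 : ∑ j ∈ Finset.univ.erase i, p j * p j ≤ t - p i * p i := by
      have := Finset.sum_erase_add Finset.univ (fun j => p j * p j) (Finset.mem_univ i)
      linarith
    have hcs : (∑ j ∈ Finset.univ.erase i, p j) ^ 2 ≤
        (Finset.univ.erase i).card * ∑ j ∈ Finset.univ.erase i, p j ^ 2 :=
      sq_sum_le_card_mul_sum_sq
    have hcard : ((Finset.univ.erase i).card : ℝ) = (n:ℝ) - 1 := by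
      rw [Finset.card_erase_of_mem (Finset.mem_univ i)]
      simp only [Finset.card_univ, Fintype.card_fin]
      have : 1 ≤ n := by omega
      push_cast [this]
      ring
    have hsq' : ∑ j ∈ Finset.univ.erase i, p j ^ 2 = ∑ j ∈ Finset.univ.erase i, p j * p j := by
      apply Finset.sum_congr rfl; intro j _; ring
    rw [h1, hcard, hsq'] at hcs
    have ht2' : ((n:ℝ) - 1) * t ≤ 1 := by
      rw [div_eq_inv_mul, mul_one] at ht2
      calc ((n:ℝ) - 1) * t ≤ ((n:ℝ) - 1) * ((n:ℝ)-1)⁻¹ := by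
            apply mul_le_mul_of_nonneg_left ht2 (by linarith)
        _ = 1 := mul_inv_cancel₀ (by linarith)
    have key : (1 - p i)^2 ≤ ((n:ℝ) - 1) * (t - p i * p i) :=
      le_trans hcs (mul_le_mul_of_nonneg_left h2 (by linarith))
    nlinarith [sq_nonneg (p i), sq_nonneg (1 - p i)]
  refine ⟨hmain, ?_⟩
  ext p
  simp only [Set.mem_setOf_eq]
  exact ⟨fun h => ⟨h.2.1, h.2.2⟩, fun h => ⟨hmain p h.1 h.2, h⟩⟩
end

section
/- Let q ∈ R^n with Σᵢ qᵢ = 1 and q ≠ (1/n)·1, let 1/n ≤ t ≤ 1/(n-1), and set p* = (1/n)·1 + √(t - 1/n) · (q - (1/n)·1)/‖q - (1/n)·1‖₂. Then p* ∈ P(t) and p*·q ≥ p·q for all p ∈ P(t); moreover p*·q = 1/n + √(t - 1/n)·√(q·q - 1/n). -/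
set_option maxHeartbeats 1000000 in
/-- Let `q ∈ ℝⁿ` with `∑ᵢ qᵢ = 1`, `q ≠ (1/n)·1`, `1/n ≤ t ≤ 1/(n-1)`, and
`p* = (1/n)·1 + √(t - 1/n)·(q - (1/n)·1)/‖q - (1/n)·1‖₂`.  Then `p* ∈ P(t)`,
`p*` maximizes `p·q` over `P(t)`, and `p*·q = 1/n + √(t - 1/n)·√(q·q - 1/n)`. -/
theorem stmt_10 {n : ℕ} (hn : 2 ≤ n) (t : ℝ)
    (ht1 : 1 / (n : ℝ) ≤ t) (ht2 : t ≤ 1 / ((n : ℝ) - 1))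
    (q : Fin n → ℝ) (hq : ∑ i, q i = 1) (hq' : q ≠ fun _ => 1 / (n : ℝ))
    (pstar : Fin n → ℝ)
    (hpstar : pstar = fun i => 1 / (n : ℝ) +
      Real.sqrt (t - 1 / n) * ((q i - 1 / n) / Real.sqrt (∑ j, (q j - 1 / n) ^ 2))) :
    ((∀ i, 0 ≤ pstar i) ∧ ∑ i, pstar i = 1 ∧ ∑ i, pstar i * pstar i ≤ t) ∧
      (∀ p : Fin n → ℝ,
        ((∀ i, 0 ≤ p i) ∧ ∑ i, p i = 1 ∧ ∑ i, p i * p i ≤ t) →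
          ∑ i, p i * q i ≤ ∑ i, pstar i * q i) ∧
      ∑ i, pstar i * q i =
        1 / n + Real.sqrt (t - 1 / n) * Real.sqrt ((∑ i, q i * q i) - 1 / n) := by
  have hn2 : (2:ℝ) ≤ (n:ℝ) := by exact_mod_cast hn
  have hnpos : (0:ℝ) < n := by linarith
  have hn1 : (0:ℝ) < (n:ℝ) - 1 := by linarith
  set c : ℝ := 1 / (n : ℝ) with hc
  have hcpos : 0 < c := by positivity
  have hnc : (n : ℝ) * c = 1 := by rw [hc]; field_simp
  set d : Fin n → ℝ := fun i => q i - c with hd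
  have hnc2 : (n : ℝ) * c ^ 2 = c := by rw [hc]; field_simp
  have hd0 : ∑ i, d i = 0 := by
    have h : ∑ i, d i = (∑ i, q i) - (n : ℝ) * c := by
      rw [hd, Finset.sum_sub_distrib, Finset.sum_const, Finset.card_univ,
        Fintype.card_fin, nsmul_eq_mul]
    rw [h, hq, hnc]; ring
  set S : ℝ := ∑ j, (q j - c) ^ 2 with hSdef
  have hSd : S = ∑ i, d i ^ 2 := rfl
  have hSnn : 0 ≤ S := Finset.sum_nonneg fun i _ => sq_nonneg _
  have hSpos : 0 < S := by
    rcases hSnn.lt_or_eq with h | h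
    · exact h
    · exfalso
      apply hq'
      funext i
      have h1 := (Finset.sum_eq_zero_iff_of_nonneg
        (fun i _ => sq_nonneg (q i - c))).mp h.symm i (Finset.mem_univ i)
      have h2 : q i - c = 0 := by nlinarith [sq_nonneg (q i - c), h1]
      rw [hc] at h2; linarith [h2]
  set s : ℝ := Real.sqrt S with hsdef
  have hspos : 0 < s := Real.sqrt_pos.mpr hSpos
  have hs2 : s ^ 2 = S := Real.sq_sqrt hSnn
  set r : ℝ := Real.sqrt (t - c) with hrdef
  have htc : 0 ≤ t - c := by linarith
  have hrnn : 0 ≤ r := Real.sqrt_nonneg _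
  have hr2 : r ^ 2 = t - c := Real.sq_sqrt htc
  have hps : ∀ i, pstar i = c + r * (d i / s) := by
    intro i; rw [hpstar]
  clear_value c d S s r
  -- key: n * d i ^ 2 ≤ (n - 1) * S
  have hkey : ∀ i, (n:ℝ) * d i ^ 2 ≤ ((n:ℝ) - 1) * S := by
    intro i
    have hcard : ((Finset.univ.erase i).card : ℝ) = (n:ℝ) - 1 := by
      rw [Finset.card_erase_of_mem (Finset.mem_univ i)]
      simp [Fintype.card_fin]
      rw [Nat.cast_sub (by omega)]
      simp
    have hsum : ∑ j ∈ Finset.univ.erase i, d j = - d i := by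
      have h : (∑ j ∈ Finset.univ.erase i, d j) + d i = ∑ j, d j :=
        Finset.sum_erase_add _ _ (Finset.mem_univ i)
      rw [hd0] at h; linarith
    have hcs := Finset.sum_mul_sq_le_sq_mul_sq (Finset.univ.erase i)
      (fun _ => (1:ℝ)) d
    simp only [one_mul, one_pow, Finset.sum_const, nsmul_eq_mul, mul_one] at hcs
    rw [hsum, hcard] at hcs
    have hsplit : ∑ j ∈ Finset.univ.erase i, d j ^ 2 = S - d i ^ 2 := by
      have h : (∑ j ∈ Finset.univ.erase i, d j ^ 2) + d i ^ 2 = ∑ j, d j ^ 2 :=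
        Finset.sum_erase_add _ _ (Finset.mem_univ i)
      rw [hSd]; linarith
    rw [hsplit] at hcs
    nlinarith [hcs, sq_nonneg (d i)]
  -- r * |d i| ≤ c * s
  have habs : ∀ i, r * |d i| ≤ c * s := by
    intro i
    have h1 : t - c ≤ 1 / ((n:ℝ) * ((n:ℝ) - 1)) := by
      have : 1 / ((n:ℝ) - 1) - 1/(n:ℝ) = 1 / ((n:ℝ)*((n:ℝ)-1)) := by
        field_simp; ring
      rw [hc]; linarith [ht2, this]
    have hsq : (r * |d i|) ^ 2 ≤ (c * s) ^ 2 := by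
      have e1 : (r * |d i|) ^ 2 = (t - c) * d i ^ 2 := by
        rw [mul_pow, hr2, sq_abs]
      have e2 : (c * s) ^ 2 = c ^ 2 * S := by rw [mul_pow, hs2]
      rw [e1, e2]
      have hd2 : d i ^ 2 ≤ (((n:ℝ)-1)/(n:ℝ)) * S := by
        rw [div_mul_eq_mul_div, le_div_iff₀ hnpos]
        linarith [hkey i]
      calc (t - c) * d i ^ 2 ≤ (1 / ((n:ℝ)*((n:ℝ)-1))) * d i ^ 2 := by
              apply mul_le_mul_of_nonneg_right h1 (sq_nonneg _)
        _ ≤ (1 / ((n:ℝ)*((n:ℝ)-1))) * ((((n:ℝ)-1)/(n:ℝ)) * S) := by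
              apply mul_le_mul_of_nonneg_left hd2 (by positivity)
        _ = c ^ 2 * S := by rw [hc]; field_simp
    have h2 : 0 ≤ r * |d i| := by positivity
    have h3 : 0 ≤ c * s := by positivity
    exact (pow_le_pow_iff_left₀ h2 h3 two_ne_zero).mp hsq
  -- nonnegativity
  have hnonneg : ∀ i, 0 ≤ pstar i := by
    intro i
    rw [hps i]
    have h1 : -(c * s) ≤ r * d i := by
      have := neg_abs_le (d i)
      nlinarith [habs i, hrnn, abs_nonneg (d i)]
    have : -c ≤ r * d i / s := by
      rw [le_div_iff₀ hspos]; linarith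
    rw [mul_div_assoc] at *
    linarith
  -- sum = 1
  have hsum1 : ∑ i, pstar i = 1 := by
    have : ∀ i, pstar i = c + (r/s) * d i := by
      intro i; rw [hps i]; ring
    rw [Finset.sum_congr rfl fun i _ => this i, Finset.sum_add_distrib,
      ← Finset.mul_sum, hd0, Finset.sum_const, Finset.card_univ, Fintype.card_fin,
      nsmul_eq_mul, hnc]
    ring
  -- sum of squares = t
  have hrsS : (r/s)^2 * S = r^2 := by
    rw [div_pow, hs2]; exact div_mul_cancel₀ _ hSpos.ne'
  have hsumsq : ∑ i, pstar i * pstar i = t := by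
    have h : ∀ i, pstar i * pstar i = c^2 + (2*c*(r/s)) * d i + (r/s)^2 * d i ^ 2 := by
      intro i; rw [hps i]; ring
    rw [Finset.sum_congr rfl fun i _ => h i]
    rw [Finset.sum_add_distrib, Finset.sum_add_distrib, ← Finset.mul_sum, hd0,
      ← Finset.mul_sum, ← hSd, Finset.sum_const, Finset.card_univ, Fintype.card_fin,
      nsmul_eq_mul, hrsS, hr2]
    linarith [hnc2]
  -- pstar · q
  have hpsq : ∑ i, pstar i * q i = c + r * s := by
    have h : ∀ i, pstar i * q i = c^2 + (c + (r/s)*c) * d i + (r/s) * d i ^ 2 := by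
      intro i
      rw [hps i]
      have : q i = d i + c := by rw [hd]; ring
      rw [this]; ring
    rw [Finset.sum_congr rfl fun i _ => h i]
    rw [Finset.sum_add_distrib, Finset.sum_add_distrib, ← Finset.mul_sum, hd0,
      ← Finset.mul_sum, ← hSd, Finset.sum_const, Finset.card_univ, Fintype.card_fin,
      nsmul_eq_mul]
    have h2 : (r/s) * S = r * s := by
      rw [← hs2]; field_simp
    rw [h2]; linarith [hnc2]
  refine ⟨⟨hnonneg, hsum1, le_of_eq hsumsq⟩, ?_, ?_⟩
  · rintro p ⟨hp0, hp1, hp2⟩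
    set e : Fin n → ℝ := fun i => p i - c with he
    clear_value e
    have he0 : ∑ i, e i = 0 := by
      simp only [he, Finset.sum_sub_distrib, hp1, Finset.sum_const, Finset.card_univ,
        Fintype.card_fin, nsmul_eq_mul, hnc]
      ring
    have hE : ∑ i, e i ^ 2 = (∑ i, p i * p i) - c := by
      have h : ∀ i, e i ^ 2 = p i * p i - (2*c) * p i + c^2 := by
        intro i; rw [he]; ring
      rw [Finset.sum_congr rfl fun i _ => h i, Finset.sum_add_distrib,
        Finset.sum_sub_distrib, ← Finset.mul_sum, hp1, Finset.sum_const,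
        Finset.card_univ, Fintype.card_fin, nsmul_eq_mul]
      linarith [hnc2]
    have hEle : ∑ i, e i ^ 2 ≤ r ^ 2 := by rw [hE, hr2]; linarith
    have hcs := Finset.sum_mul_sq_le_sq_mul_sq Finset.univ e d
    have hed : (∑ i, e i * d i) ^ 2 ≤ (r * s) ^ 2 := by
      calc (∑ i, e i * d i) ^ 2 ≤ (∑ i, e i ^ 2) * (∑ i, d i ^ 2) := hcs
        _ ≤ r ^ 2 * S := by
            rw [← hSd]
            exact mul_le_mul_of_nonneg_right hEle hSnn
        _ = (r * s) ^ 2 := by rw [mul_pow, hs2]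
    have hedle : ∑ i, e i * d i ≤ r * s := by
      nlinarith [hed, mul_nonneg hrnn hspos.le]
    have hpq : ∑ i, p i * q i = c + ∑ i, e i * d i := by
      have h : ∀ i, p i * q i = e i * d i + c * e i + c * d i + c^2 := by
        intro i
        have h1 : p i = e i + c := by rw [he]; ring
        have h2 : q i = d i + c := by rw [hd]; ring
        rw [h1, h2]; ring
      rw [Finset.sum_congr rfl fun i _ => h i, Finset.sum_add_distrib,
        Finset.sum_add_distrib, Finset.sum_add_distrib, ← Finset.mul_sum, he0,
        ← Finset.mul_sum, hd0, Finset.sum_const, Finset.card_univ, Fintype.card_fin,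
        nsmul_eq_mul]
      linarith [hnc2]
    rw [hpq, hpsq]; linarith
  · rw [hpsq]
    have hqq : (∑ i, q i * q i) - c = S := by
      have h : ∀ i, q i * q i = d i ^ 2 + (2*c) * d i + c^2 := by
        intro i
        have h2 : q i = d i + c := by rw [hd]; ring
        nth_rewrite 1 [h2]; nth_rewrite 1 [h2]; ring
      rw [Finset.sum_congr rfl fun i _ => h i, Finset.sum_add_distrib,
        Finset.sum_add_distrib, ← Finset.mul_sum, hd0, ← hSd, Finset.sum_const,
        Finset.card_univ, Fintype.card_fin, nsmul_eq_mul]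
      linarith [hnc2]
    rw [hqq, ← hsdef]
end

section
/- For q = e(i) (a standard basis vector in R^n) and 1/n ≤ t ≤ 1, the maximum of p·q over p ∈ P(t) equals (1/n)(1 + √((nt-1)(n-1))), attained at p = 1/n·1 + √((nt-1)/(n-1))·(e(i) - 1/n·1). -/
lemma sum_ite_split' {n : ℕ} (hn : 1 ≤ n) (i : Fin n) (F : ℝ → ℝ) :
    ∑ j : Fin n, F (if j = i then (1:ℝ) else 0) = ((n:ℝ) - 1) * F 0 + F 1 := by
  rw [← Finset.sum_erase_add Finset.univ _ (Finset.mem_univ i)]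
  simp only [if_pos rfl]
  congr 1
  rw [Finset.sum_congr rfl (fun j hj => by
    rw [if_neg (Finset.ne_of_mem_erase hj)]), Finset.sum_const,
    Finset.card_erase_of_mem (Finset.mem_univ i), Finset.card_univ, Fintype.card_fin]
  rw [nsmul_eq_mul, Nat.cast_sub hn]
  norm_num

set_option maxHeartbeats 2000000 in
/-- For `q = e(i)` a standard basis vector of `ℝⁿ` and `1/n ≤ t ≤ 1`, the maximum of
`p·q` over `P(t)` equals `(1/n)(1 + √((nt-1)(n-1)))`, attained at
`p = (1/n)·1 + √((nt-1)/(n-1))·(e(i) - (1/n)·1)`. -/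
theorem stmt_11 {n : ℕ} (hn : 2 ≤ n) (t : ℝ)
    (ht1 : 1 / (n : ℝ) ≤ t) (ht2 : t ≤ 1) (i : Fin n)
    (q : Fin n → ℝ) (hq : q = fun j => if j = i then 1 else 0)
    (p : Fin n → ℝ)
    (hp : p = fun j => 1 / (n : ℝ) +
      Real.sqrt (((n : ℝ) * t - 1) / ((n : ℝ) - 1)) *
        ((if j = i then 1 else 0) - 1 / (n : ℝ))) :
    ((∀ j, 0 ≤ p j) ∧ ∑ j, p j = 1 ∧ ∑ j, p j * p j ≤ t) ∧
      ∑ j, p j * q j = (1 / (n : ℝ)) * (1 + Real.sqrt (((n : ℝ) * t - 1) * ((n : ℝ) - 1))) ∧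
      ∀ p' : Fin n → ℝ,
        ((∀ j, 0 ≤ p' j) ∧ ∑ j, p' j = 1 ∧ ∑ j, p' j * p' j ≤ t) →
          ∑ j, p' j * q j ≤ (1 / (n : ℝ)) * (1 + Real.sqrt (((n : ℝ) * t - 1) * ((n : ℝ) - 1))) := by
  have hn1 : (1:ℕ) ≤ n := le_trans (by norm_num) hn
  have hnR : (2:ℝ) ≤ (n:ℝ) := by exact_mod_cast hn
  have hn0 : (0:ℝ) < (n:ℝ) := by linarith
  have hn1R : (0:ℝ) < (n:ℝ) - 1 := by linarith
  have hnt1 : (0:ℝ) ≤ (n:ℝ) * t - 1 := by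
    have := (div_le_iff₀ hn0).mp ht1
    linarith
  set a : ℝ := ((n:ℝ) * t - 1) / ((n:ℝ) - 1) with ha
  have ha0 : 0 ≤ a := div_nonneg hnt1 (le_of_lt hn1R)
  have ha1 : a ≤ 1 := by
    rw [ha, div_le_one hn1R]; nlinarith
  set s : ℝ := Real.sqrt a with hs
  have hs0 : 0 ≤ s := Real.sqrt_nonneg a
  have hs1 : s ≤ 1 := Real.sqrt_le_one.2 ha1
  have hs2 : s ^ 2 = a := Real.sq_sqrt ha0
  have ha' : s ^ 2 * ((n:ℝ) - 1) = (n:ℝ) * t - 1 := by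
    rw [hs2, ha]; field_simp
  -- key sqrt identity
  have hR : Real.sqrt (((n:ℝ) * t - 1) * ((n:ℝ) - 1)) = s * ((n:ℝ) - 1) := by
    have h : ((n:ℝ) * t - 1) * ((n:ℝ) - 1) = a * ((n:ℝ) - 1) ^ 2 := by
      rw [ha]; field_simp
    rw [h, Real.sqrt_mul ha0, Real.sqrt_sq (le_of_lt hn1R)]
  -- feasibility: nonneg
  have hnonneg : ∀ j, 0 ≤ p j := by
    intro j
    rw [hp]
    by_cases h : j = i
    · simp only [h, if_pos rfl]
      have h1 : (0:ℝ) ≤ 1 - 1 / (n:ℝ) := by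
        rw [sub_nonneg, div_le_one hn0]; linarith
      have : 0 ≤ s * (1 - 1 / (n:ℝ)) := mul_nonneg hs0 h1
      positivity
    · simp only [if_neg h]
      have h2 : s * (0 - 1 / (n:ℝ)) = -(s / n) := by ring
      rw [h2, ← sub_eq_add_neg, sub_nonneg, div_le_div_iff₀ hn0 hn0]
      nlinarith
  -- sum = 1
  have e1 : ∑ j : Fin n, (1/(n:ℝ) + s * ((if j = i then (1:ℝ) else 0) - 1/(n:ℝ)))
      = ((n:ℝ)-1) * (1/(n:ℝ) + s*((0:ℝ) - 1/(n:ℝ))) + (1/(n:ℝ) + s*((1:ℝ) - 1/(n:ℝ))) :=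
    sum_ite_split' hn1 i (fun y => 1/(n:ℝ) + s*(y - 1/(n:ℝ)))
  have hsum : ∑ j, p j = 1 := by
    simp only [hp]
    rw [e1]
    field_simp
    ring
  -- sum of squares
  have e2 : ∑ j : Fin n, ((1/(n:ℝ) + s * ((if j = i then (1:ℝ) else 0) - 1/(n:ℝ))) *
        (1/(n:ℝ) + s * ((if j = i then (1:ℝ) else 0) - 1/(n:ℝ))))
      = ((n:ℝ)-1) * ((1/(n:ℝ) + s*((0:ℝ) - 1/(n:ℝ))) * (1/(n:ℝ) + s*((0:ℝ) - 1/(n:ℝ))))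
        + (1/(n:ℝ) + s*((1:ℝ) - 1/(n:ℝ))) * (1/(n:ℝ) + s*((1:ℝ) - 1/(n:ℝ))) :=
    sum_ite_split' hn1 i (fun y => (1/(n:ℝ) + s*(y - 1/(n:ℝ))) * (1/(n:ℝ) + s*(y - 1/(n:ℝ))))
  have hsq : ∑ j, p j * p j ≤ t := by
    have heq : ∑ j, p j * p j = t := by
      simp only [hp]
      rw [e2]
      have expand : ((n:ℝ)-1) * ((1/(n:ℝ) + s*((0:ℝ) - 1/(n:ℝ))) * (1/(n:ℝ) + s*((0:ℝ) - 1/(n:ℝ))))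
          + (1/(n:ℝ) + s*((1:ℝ) - 1/(n:ℝ))) * (1/(n:ℝ) + s*((1:ℝ) - 1/(n:ℝ)))
          = (1 + s ^ 2 * ((n:ℝ) - 1)) / (n:ℝ) := by
        field_simp
        ring
      rw [expand, ha', div_eq_iff (ne_of_gt hn0)]
      ring
    linarith [heq.le]
  -- value
  have hval : ∑ j, p j * q j = (1 / (n : ℝ)) * (1 + Real.sqrt (((n:ℝ) * t - 1) * ((n:ℝ) - 1))) := by
    simp only [hq, hp, hR]
    have h : ∑ j, ((1 / (n : ℝ) + s * ((if j = i then (1:ℝ) else 0) - 1 / (n:ℝ))) *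
        (if j = i then (1:ℝ) else 0))
        = 1 / (n : ℝ) + s * (1 - 1 / (n:ℝ)) := by
      rw [Finset.sum_eq_single i]
      · simp
      · intro j _ hj; simp [hj]
      · simp
    rw [h]
    field_simp
  refine ⟨⟨hnonneg, hsum, hsq⟩, hval, ?_⟩
  -- optimality
  intro p' ⟨hp'0, hp'1, hp'2⟩
  have hval' : ∑ j, p' j * q j = p' i := by
    rw [hq, Finset.sum_eq_single i]
    · simp
    · intro j _ hj; simp [hj]
    · simp
  rw [hval', hR]
  have hinv : (n:ℝ) * (1/(n:ℝ)) = 1 := by field_simp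
  obtain ⟨x, hx⟩ : ∃ x : ℝ, x = p' i - 1 / (n:ℝ) := ⟨_, rfl⟩
  have key1 : ∑ j, (p' j - 1 / (n:ℝ)) ^ 2 ≤ t - 1 / (n:ℝ) := by
    have h0 : ∑ j, (p' j - 1/(n:ℝ))^2
        = ∑ j, (p' j * p' j - (2 * (1/(n:ℝ))) * p' j + (1/(n:ℝ))^2) := by
      apply Finset.sum_congr rfl; intro j _; ring
    rw [h0, Finset.sum_add_distrib, Finset.sum_sub_distrib, ← Finset.mul_sum, hp'1,
      Finset.sum_const, Finset.card_univ, Fintype.card_fin, nsmul_eq_mul]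
    have hsq1 : (n:ℝ) * (1/(n:ℝ))^2 = 1/(n:ℝ) := by
      field_simp
    linarith [hp'2, hsq1, hinv]
  have hmemi : i ∈ (Finset.univ : Finset (Fin n)) := Finset.mem_univ i
  have key2 : (∑ j ∈ Finset.univ.erase i, (1:ℝ) * (p' j - 1 / (n:ℝ))) ^ 2
      ≤ (∑ j ∈ Finset.univ.erase i, (1:ℝ)^2) * ∑ j ∈ Finset.univ.erase i, (p' j - 1/(n:ℝ))^2 :=
    Finset.sum_mul_sq_le_sq_mul_sq _ _ _
  have hcard : (∑ j ∈ Finset.univ.erase i, (1:ℝ)^2) = (n:ℝ) - 1 := by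
    rw [Finset.sum_const, Finset.card_erase_of_mem hmemi, Finset.card_univ, Fintype.card_fin,
      nsmul_eq_mul, Nat.cast_sub hn1]
    norm_num
  have hsum' : ∑ j ∈ Finset.univ.erase i, (1:ℝ) * (p' j - 1 / (n:ℝ)) = -x := by
    simp only [one_mul]
    have h1 : ∑ j ∈ Finset.univ.erase i, (p' j - 1/(n:ℝ)) + (p' i - 1/(n:ℝ))
        = ∑ j, (p' j - 1/(n:ℝ)) := Finset.sum_erase_add _ _ hmemi
    have h2 : ∑ j, (p' j - 1/(n:ℝ)) = 0 := by
      rw [Finset.sum_sub_distrib, hp'1, Finset.sum_const, Finset.card_univ, Fintype.card_fin,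
        nsmul_eq_mul]
      field_simp
      norm_num
    rw [h2] at h1
    rw [hx]
    linarith [h1]
  have hsq' : ∑ j ∈ Finset.univ.erase i, (p' j - 1/(n:ℝ))^2
      = (∑ j, (p' j - 1/(n:ℝ))^2) - x^2 := by
    have h := Finset.sum_erase_add Finset.univ (fun j => (p' j - 1/(n:ℝ))^2) hmemi
    rw [hx]
    linarith [h]
  rw [hsum', hcard, hsq'] at key2
  -- derive the bound on x
  have h3 : x^2 ≤ ((n:ℝ) - 1) * ((t - 1/(n:ℝ)) - x^2) := by
    calc x^2 = (-x)^2 := by ring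
      _ ≤ ((n:ℝ) - 1) * ((∑ j, (p' j - 1/(n:ℝ))^2) - x^2) := key2
      _ ≤ ((n:ℝ) - 1) * ((t - 1/(n:ℝ)) - x^2) := by
          apply mul_le_mul_of_nonneg_left (by linarith [key1]) (le_of_lt hn1R)
  have h4 : (n:ℝ) * x^2 ≤ ((n:ℝ)-1) * (t - 1/(n:ℝ)) := by nlinarith [h3]
  have h5 : (n:ℝ) * ((n:ℝ) * x^2) ≤ (n:ℝ) * (((n:ℝ)-1) * (t - 1/(n:ℝ))) :=
    mul_le_mul_of_nonneg_left h4 (le_of_lt hn0)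
  have h6 : (n:ℝ) * (((n:ℝ)-1) * (t - 1/(n:ℝ))) = ((n:ℝ)*t - 1) * ((n:ℝ) - 1) := by
    field_simp
  have hx2 : x^2 * (n:ℝ)^2 ≤ ((n:ℝ)*t - 1) * ((n:ℝ) - 1) := by linarith [h5, h6]
  set R : ℝ := s * ((n:ℝ) - 1) / (n:ℝ) with hRdef
  have hRnn : 0 ≤ R := by positivity
  have hRsq : R^2 * (n:ℝ)^2 = ((n:ℝ)*t - 1) * ((n:ℝ) - 1) := by
    have h7 : R^2 * (n:ℝ)^2 = (s ^ 2 * ((n:ℝ) - 1)) * ((n:ℝ) - 1) := by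
      rw [hRdef]; field_simp
    rw [h7, ha']
  have hxle : x ≤ R := by
    have hn2 : (0:ℝ) < (n:ℝ)^2 := by positivity
    have hxR2 : x^2 ≤ R^2 := le_of_mul_le_mul_right (by linarith [hx2, hRsq]) hn2
    have h7 : |x| ≤ |R| := by
      rw [← Real.sqrt_sq_eq_abs, ← Real.sqrt_sq_eq_abs]
      exact Real.sqrt_le_sqrt hxR2
    exact le_trans (le_abs_self x) (h7.trans_eq (abs_of_nonneg hRnn))
  have hpi : p' i = 1/(n:ℝ) + x := by rw [hx]; ring
  have hgoal : (1/(n:ℝ)) * (1 + s * ((n:ℝ)-1)) = 1/(n:ℝ) + R := by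
    rw [hRdef]; ring
  linarith [hxle, hpi.le, hgoal.le, hgoal.ge, hpi.ge]
end

section
/- Let n = d² and q = e(1) ⊗ (1/d)·1_d ∈ R^d ⊗ R^d. If 1/d² ≤ t ≤ 1/d, then the maximum of p·q over p ∈ P(t) equals (1/d²)(1 + √((td² - 1)(d - 1))). -/
/-!
Let `S` be the mass that `p` puts on row `i`, so that `p · q = S / d`. Cauchy–Schwarz on the row
(`d` entries) and on its complement (`d² - d` entries) gives
`d (d - 1) S² + d (1 - S)² ≤ d² (d - 1) ∑ pⱼ²`, i.e. `(d S - 1)² ≤ (t d² - 1)(d - 1)`.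
The bound is attained on the segment from the uniform distribution to `q`,
`p = (1 - c) / d² + c q` with `c = √((t d² - 1) / (d - 1))`; `t ≤ 1 / d` gives `c ≤ 1`, hence `p ≥ 0`.
-/

open Finset

theorem card_compl_mul_sq_sum_add_card_mul_sq_sum_compl_le {ι : Type*} [Fintype ι]
    [DecidableEq ι] (s : Finset ι) (p : ι → ℝ) :
    (#sᶜ : ℝ) * (∑ i ∈ s, p i) ^ 2 + #s * (∑ i ∈ sᶜ, p i) ^ 2 ≤ #s * #sᶜ * ∑ i, p i ^ 2 := by
  have hs := sq_sum_le_card_mul_sum_sq (s := s) (f := p)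
  have hsc := sq_sum_le_card_mul_sum_sq (s := sᶜ) (f := p)
  rw [← sum_add_sum_compl s (fun i => p i ^ 2)]
  nlinarith [mul_le_mul_of_nonneg_left hs (Nat.cast_nonneg #sᶜ : (0 : ℝ) ≤ #sᶜ),
    mul_le_mul_of_nonneg_left hsc (Nat.cast_nonneg #s : (0 : ℝ) ≤ #s)]

theorem Real.sqrt_div_mul_self {x : ℝ} (hx : 0 ≤ x) (y : ℝ) : √(x / y) * y = √(x * y) := by
  rw [Real.sqrt_div hx, div_mul_eq_mul_div, mul_div_assoc, Real.div_sqrt, Real.sqrt_mul hx]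

theorem Real.sq_sqrt_div_mul_self {x y : ℝ} (hx : 0 ≤ x) (hxy : x ≤ y) :
    √(x / y) ^ 2 * y = x := by
  rw [Real.sq_sqrt (div_nonneg hx (hx.trans hxy))]
  rcases (hx.trans hxy).eq_or_lt with hy | hy
  · rw [← hy] at hxy ⊢
    simp [le_antisymm hxy hx]
  · exact div_mul_cancel₀ x hy.ne'

noncomputable def rowUniform {d : ℕ} (i : Fin d) : Fin d × Fin d → ℝ :=
  fun x => if x.1 = i then 1 / (d : ℝ) else 0

noncomputable def rowTilt {d : ℕ} (c : ℝ) (i : Fin d) : Fin d × Fin d → ℝ :=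
  fun x => (1 - c) / (d : ℝ) ^ 2 + c * rowUniform i x

section

variable {d : ℕ} (i : Fin d)

theorem sum_rowUniform : ∑ x, rowUniform i x = 1 := by
  have hd : (d : ℝ) ≠ 0 := by exact_mod_cast i.pos.ne'
  rw [Fintype.sum_prod_type]
  simp [rowUniform, hd]

theorem sum_rowUniform_sq : ∑ x, rowUniform i x ^ 2 = 1 / d := by
  have hsq (x : Fin d × Fin d) : rowUniform i x ^ 2 = rowUniform i x / d := by
    unfold rowUniform
    split_ifs <;> ring
  simp_rw [hsq, ← sum_div, sum_rowUniform]

theorem sum_mul_rowUniform (p : Fin d × Fin d → ℝ) :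
    ∑ x, p x * rowUniform i x = (∑ x ∈ {i} ×ˢ univ, p x) / d := by
  rw [Fintype.sum_prod_type, sum_product]
  simp [rowUniform, mul_ite, div_eq_mul_inv, sum_mul]

theorem sum_mul_rowUniform_le {t : ℝ} (p : Fin d × Fin d → ℝ) (hp : ∑ x, p x = 1)
    (hpt : ∑ x, p x ^ 2 ≤ t) :
    ∑ x, p x * rowUniform i x ≤ 1 / (d : ℝ) ^ 2 * (1 + √((t * d ^ 2 - 1) * (d - 1))) := by
  set s : Finset (Fin d × Fin d) := {i} ×ˢ univ
  have hd : (1 : ℝ) ≤ d := by exact_mod_cast i.pos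
  have hs : (#s : ℝ) = d := by simp [s]
  have hsc : (#sᶜ : ℝ) = d * (d - 1) := by
    rw [card_compl, Nat.cast_sub (card_le_univ s)]
    simp only [Fintype.card_prod, Fintype.card_fin, Nat.cast_mul, singleton_product, card_map,
      card_univ, s]
    ring
  have hcompl : ∑ x ∈ sᶜ, p x = 1 - ∑ x ∈ s, p x := by
    rw [← hp, ← sum_add_sum_compl s p]
    ring
  have hcs := card_compl_mul_sq_sum_add_card_mul_sq_sum_compl_le s p
  rw [hs, hsc, hcompl] at hcs
  have hsq : (d * ∑ x ∈ s, p x - 1) ^ 2 ≤ (t * d ^ 2 - 1) * (d - 1) := by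
    have : (d : ℝ) * (d - 1) * ∑ x, p x ^ 2 ≤ d * (d - 1) * t := by gcongr
    -- `d (d - 1) S² + d (1 - S)² = d ((d S - 1)² + d - 1)`
    nlinarith
  rw [sum_mul_rowUniform]
  calc (∑ x ∈ s, p x) / d = 1 / (d : ℝ) ^ 2 * (1 + (d * ∑ x ∈ s, p x - 1)) := by
        field_simp
        ring
    _ ≤ _ := by
        gcongr
        exact (le_abs_self _).trans (Real.abs_le_sqrt hsq)

theorem rowTilt_nonneg {c : ℝ} (hc₀ : 0 ≤ c) (hc₁ : c ≤ 1) (x : Fin d × Fin d) :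
    0 ≤ rowTilt c i x := by
  have : 0 ≤ rowUniform i x := by
    unfold rowUniform
    split_ifs <;> positivity
  have : 0 ≤ 1 - c := by linarith
  unfold rowTilt
  positivity

theorem sum_rowTilt (c : ℝ) : ∑ x, rowTilt c i x = 1 := by
  have hd : (d : ℝ) ≠ 0 := by exact_mod_cast i.pos.ne'
  simp only [rowTilt, sum_add_distrib, ← mul_sum, sum_rowUniform, sum_const, card_univ,
    Fintype.card_prod, Fintype.card_fin, nsmul_eq_mul, Nat.cast_mul]
  field_simp
  ring

theorem sum_rowTilt_sq (c : ℝ) :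
    ∑ x, rowTilt c i x ^ 2 = (1 + c ^ 2 * (d - 1)) / (d : ℝ) ^ 2 := by
  have hd : (d : ℝ) ≠ 0 := by exact_mod_cast i.pos.ne'
  simp only [rowTilt, add_sq, mul_pow, sum_add_distrib, ← mul_sum, sum_rowUniform,
    sum_rowUniform_sq, sum_const, card_univ, Fintype.card_prod, Fintype.card_fin, nsmul_eq_mul,
    Nat.cast_mul]
  field_simp
  ring

theorem sum_rowTilt_mul_rowUniform (c : ℝ) :
    ∑ x, rowTilt c i x * rowUniform i x = (1 + c * (d - 1)) / (d : ℝ) ^ 2 := by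
  have hd : (d : ℝ) ≠ 0 := by exact_mod_cast i.pos.ne'
  simp only [rowTilt, add_mul, mul_assoc, ← sq, sum_add_distrib, ← mul_sum, sum_rowUniform,
    sum_rowUniform_sq]
  field_simp
  ring

end

/-- Let `n = d²` (indexed by `Fin d × Fin d`) and `q = e(1) ⊗ (1/d)·1_d`.  If
`1/d² ≤ t ≤ 1/d`, then the maximum of `p·q` over `P(t)` equals
`(1/d²)(1 + √((td² - 1)(d - 1)))`. -/
theorem stmt_13 {d : ℕ} (hd : 0 < d) (t : ℝ)
    (ht1 : 1 / ((d : ℝ) ^ 2) ≤ t) (ht2 : t ≤ 1 / (d : ℝ))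
    (q : Fin d × Fin d → ℝ)
    (hq : q = fun x => if x.1 = ⟨0, hd⟩ then 1 / (d : ℝ) else 0) :
    IsGreatest {x : ℝ | ∃ p : Fin d × Fin d → ℝ,
        ((∀ j, 0 ≤ p j) ∧ ∑ j, p j = 1 ∧ ∑ j, p j * p j ≤ t) ∧
        x = ∑ j, p j * q j}
      ((1 / ((d : ℝ) ^ 2)) * (1 + Real.sqrt ((t * (d : ℝ) ^ 2 - 1) * ((d : ℝ) - 1)))) := by
  rw [show q = rowUniform ⟨0, hd⟩ from hq]
  have hd' : (0 : ℝ) < d := by exact_mod_cast hd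
  have hx : 0 ≤ t * d ^ 2 - 1 := by
    rw [div_le_iff₀ (by positivity)] at ht1
    linarith
  have hxy : t * d ^ 2 - 1 ≤ d - 1 := by
    rw [le_div_iff₀ hd'] at ht2
    nlinarith
  -- for `d = 1` this is `√(0 / 0) = 0`, and then `t = 1`
  set c := √((t * d ^ 2 - 1) / (d - 1))
  have hc₁ : c ≤ 1 := Real.sqrt_le_one.mpr (div_le_one_of_le₀ hxy (hx.trans hxy))
  have hc₂ : c ^ 2 * (d - 1) = t * d ^ 2 - 1 := Real.sq_sqrt_div_mul_self hx hxy
  refine ⟨⟨rowTilt c ⟨0, hd⟩,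
    ⟨rowTilt_nonneg _ (Real.sqrt_nonneg _) hc₁, sum_rowTilt _ c, ?_⟩, ?_⟩, ?_⟩
  · simp_rw [← sq, sum_rowTilt_sq, hc₂]
    rw [div_le_iff₀ (by positivity)]
    linarith
  · rw [sum_rowTilt_mul_rowUniform, Real.sqrt_div_mul_self hx]
    ring
  · rintro _ ⟨p, ⟨-, hp, hpt⟩, rfl⟩
    exact sum_mul_rowUniform_le _ p hp (by simpa only [sq] using hpt)
end

section
/- For n = 2 and 1/2 ≤ t ≤ 1, the maximum of p·q over p ∈ P(t) ⊂ R² is attained at p* = ½(1 + √(2t−1)·s·(1,−1)) where s = sign(2q₁ − 1) (with q₁ + q₂ = 1), and this p* lies in P(t). -/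
set_option maxHeartbeats 1000000

/-- For `n = 2` and `1/2 ≤ t ≤ 1`, the maximum of `p·q` over `P(t) ⊂ ℝ²` is attained at
`p* = ½(1 + √(2t−1)·s·(1,−1))` with `s = sign(2q₁ − 1)` (and `q₁ + q₂ = 1`), and this
`p*` lies in `P(t)`. -/
theorem stmt_14 (t : ℝ) (ht1 : 1 / 2 ≤ t) (ht2 : t ≤ 1)
    (q : Fin 2 → ℝ) (hq : q 0 + q 1 = 1)
    (pstar : Fin 2 → ℝ)
    (hpstar : pstar = fun j =>
      (1 / 2) * (1 + Real.sqrt (2 * t - 1) * Real.sign (2 * q 0 - 1) *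
        (if j = 0 then 1 else -1))) :
    ((∀ j, 0 ≤ pstar j) ∧ ∑ j, pstar j = 1 ∧ ∑ j, pstar j * pstar j ≤ t) ∧
      ∀ p : Fin 2 → ℝ,
        ((∀ j, 0 ≤ p j) ∧ ∑ j, p j = 1 ∧ ∑ j, p j * p j ≤ t) →
          ∑ j, p j * q j ≤ ∑ j, pstar j * q j := by
  have h2t : (0:ℝ) ≤ 2 * t - 1 := by linarith
  have hr0 : 0 ≤ Real.sqrt (2 * t - 1) := Real.sqrt_nonneg _
  have hr2 : Real.sqrt (2 * t - 1) ^ 2 = 2 * t - 1 := Real.sq_sqrt h2t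
  have hr1 : Real.sqrt (2 * t - 1) ≤ 1 := by nlinarith
  set r := Real.sqrt (2 * t - 1) with hrdef
  have hcase : (Real.sign (2 * q 0 - 1) = 1 ∧ 0 < 2 * q 0 - 1) ∨
      (Real.sign (2 * q 0 - 1) = -1 ∧ 2 * q 0 - 1 < 0) ∨
      (Real.sign (2 * q 0 - 1) = 0 ∧ 2 * q 0 - 1 = 0) := by
    rcases lt_trichotomy (2 * q 0 - 1) 0 with h | h | h
    · exact Or.inr (Or.inl ⟨Real.sign_of_neg h, h⟩)
    · exact Or.inr (Or.inr ⟨by rw [h, Real.sign_zero], h⟩)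
    · exact Or.inl ⟨Real.sign_of_pos h, h⟩
  have hp0 : pstar 0 = 1 / 2 * (1 + r * Real.sign (2 * q 0 - 1)) := by
    rw [hpstar]; simp
  have hp1 : pstar 1 = 1 / 2 * (1 - r * Real.sign (2 * q 0 - 1)) := by
    rw [hpstar]; norm_num; ring
  constructor
  · have h0 : 0 ≤ pstar 0 := by
      rw [hp0]
      rcases hcase with ⟨hs, hu⟩ | ⟨hs, hu⟩ | ⟨hs, hu⟩ <;> rw [hs] <;> nlinarith
    have h1 : 0 ≤ pstar 1 := by
      rw [hp1]
      rcases hcase with ⟨hs, hu⟩ | ⟨hs, hu⟩ | ⟨hs, hu⟩ <;> rw [hs] <;> nlinarith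
    refine ⟨fun j => ?_, ?_, ?_⟩
    · fin_cases j
      · exact h0
      · exact h1
    · rw [Fin.sum_univ_two, hp0, hp1]; ring
    · rw [Fin.sum_univ_two, hp0, hp1]
      rcases hcase with ⟨hs, hu⟩ | ⟨hs, hu⟩ | ⟨hs, hu⟩ <;> rw [hs] <;> nlinarith
  · intro p hp
    obtain ⟨hnn, hsum, hsq⟩ := hp
    simp only [Fin.sum_univ_two] at hsum hsq ⊢
    have hb : (2 * p 0 - 1) ^ 2 ≤ r ^ 2 := by nlinarith
    have hx1 : 2 * p 0 - 1 ≤ r := by nlinarith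
    have hx2 : -r ≤ 2 * p 0 - 1 := by nlinarith
    have hq1 : q 1 = 1 - q 0 := by linarith
    have hp1' : p 1 = 1 - p 0 := by linarith
    rw [hp0, hp1, hq1, hp1']
    rcases hcase with ⟨hs, hu⟩ | ⟨hs, hu⟩ | ⟨hs, hu⟩ <;> rw [hs]
    · nlinarith [mul_nonneg (by linarith : (0:ℝ) ≤ r - (2 * p 0 - 1)) hu.le]
    · nlinarith [mul_nonneg (by linarith : (0:ℝ) ≤ r + (2 * p 0 - 1))
        (by linarith : (0:ℝ) ≤ 1 - 2 * q 0)]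
    · nlinarith
end

section
/- For the d-dimensional identity channel, O_t(I_d) = (1/d²)(1 + √((td² − 1)(d² − 1))) for 1/d² ≤ t ≤ 1, attained at ρ* = (1−λ)I/d² + λ φ⁺ with λ = √((td²−1)/(d²−1)). -/
/-!
Write `ρ = I/n + Δ` and `|ψ⟩⟨ψ| = I/n + Q` with `n = d²`. Since both have trace one,
`⟨ψ|ρ|ψ⟩ - 1/n = Tr(ΔQ)`, `Tr Δ² = Tr ρ² - 1/n ≤ t - 1/n` and `Tr Q² = 1 - 1/n`, so the
Cauchy–Schwarz inequality for the Hilbert–Schmidt inner product bounds `⟨ψ|ρ|ψ⟩`.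
Equality holds for `Δ = λQ` with `λ ≥ 0` chosen to saturate the purity constraint, which is the
isotropic state `ρ*`.
-/

open Matrix
open scoped ComplexOrder

theorem Matrix.re_trace_mul_conjTranspose_le {ι 𝕜 : Type*} [Fintype ι] [DecidableEq ι] [RCLike 𝕜]
    (A B : Matrix ι ι 𝕜) :
    RCLike.re (A * Bᴴ).trace ≤ √(RCLike.re (A * Aᴴ).trace) * √(RCLike.re (B * Bᴴ).trace) := by
  let _ := (1 : Matrix ι ι 𝕜).toMatrixSeminormedAddCommGroup PosSemidef.one
  let _ := (1 : Matrix ι ι 𝕜).toMatrixInnerProductSpace PosSemidef.one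
  have inner_eq (X Y : Matrix ι ι 𝕜) : inner 𝕜 X Y = (Y * Xᴴ).trace := by
    change (Y * 1 * Xᴴ).trace = _
    rw [Matrix.mul_one]
  have h := re_inner_le_norm (𝕜 := 𝕜) B A
  rw [norm_eq_sqrt_re_inner (𝕜 := 𝕜), norm_eq_sqrt_re_inner (𝕜 := 𝕜), inner_eq, inner_eq,
    inner_eq, mul_comm] at h
  exact h

section

variable {ι R : Type*} [Fintype ι]

theorem Matrix.trace_sub_inv_card_smul_one_mul [DecidableEq ι] [Field R] [CharZero R]
    [Nonempty ι] {A B : Matrix ι ι R} (hA : A.trace = 1) (hB : B.trace = 1) :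
    ((A - (Fintype.card ι : R)⁻¹ • 1) * (B - (Fintype.card ι : R)⁻¹ • 1)).trace
      = (A * B).trace - (Fintype.card ι : R)⁻¹ := by
  have hcard : (Fintype.card ι : R) ≠ 0 := Nat.cast_ne_zero.mpr Fintype.card_ne_zero
  simp only [sub_mul, mul_sub, Matrix.smul_mul, Matrix.mul_smul, Matrix.one_mul, Matrix.mul_one,
    smul_smul, trace_sub, trace_smul, trace_one, hA, hB, smul_eq_mul]
  field_simp
  ring

variable [CommRing R] [StarRing R] {ψ : ι → R}

theorem Matrix.trace_vecMulVec_self_star (hψ : star ψ ⬝ᵥ ψ = 1) :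
    (vecMulVec ψ (star ψ)).trace = 1 := by
  rw [trace_vecMulVec, dotProduct_comm, hψ]

theorem Matrix.vecMulVec_self_star_mul_self (hψ : star ψ ⬝ᵥ ψ = 1) :
    vecMulVec ψ (star ψ) * vecMulVec ψ (star ψ) = vecMulVec ψ (star ψ) := by
  rw [vecMulVec_mul_vecMulVec, hψ, one_smul]

theorem Matrix.trace_mul_vecMulVec_self_star (M : Matrix ι ι R) :
    (M * vecMulVec ψ (star ψ)).trace = star ψ ⬝ᵥ M *ᵥ ψ := by
  rw [mul_vecMulVec, trace_vecMulVec, dotProduct_comm]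

end

section

variable {ι : Type*} [Fintype ι] [DecidableEq ι] [Nonempty ι] {ψ : ι → ℂ}

theorem Matrix.IsHermitian.re_star_dotProduct_mulVec_sub_le {ρ : Matrix ι ι ℂ}
    (hρ : ρ.IsHermitian) (htr : ρ.trace = 1) (hψ : star ψ ⬝ᵥ ψ = 1) :
    (star ψ ⬝ᵥ ρ *ᵥ ψ).re - (Fintype.card ι : ℝ)⁻¹
      ≤ √((ρ * ρ).trace.re - (Fintype.card ι : ℝ)⁻¹) * √(1 - (Fintype.card ι : ℝ)⁻¹) := by
  set P := vecMulVec ψ (star ψ)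
  set c : ℂ := (Fintype.card ι : ℂ)⁻¹
  have hc : c = ((Fintype.card ι : ℝ)⁻¹ : ℝ) := by simp [c]
  have centered_herm {A : Matrix ι ι ℂ} (hA : A.IsHermitian) : (A - c • 1)ᴴ = A - c • 1 := by
    rw [conjTranspose_sub, conjTranspose_smul, conjTranspose_one, hA.eq, hc, Complex.star_def,
      Complex.conj_ofReal]
  have hP : P.IsHermitian := (posSemidef_vecMulVec_self_star ψ).isHermitian
  have hPtr : P.trace = 1 := trace_vecMulVec_self_star hψ
  have h := re_trace_mul_conjTranspose_le (ρ - c • 1) (P - c • 1)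
  rw [centered_herm hρ, centered_herm hP, trace_sub_inv_card_smul_one_mul htr hPtr,
    trace_sub_inv_card_smul_one_mul htr htr, trace_sub_inv_card_smul_one_mul hPtr hPtr,
    vecMulVec_self_star_mul_self hψ, hPtr, trace_mul_vecMulVec_self_star] at h
  simpa using h

end

theorem Real.sqrt_div_mul_self_s16 (a : ℝ) {b : ℝ} (hb : 0 ≤ b) : √(a / b) * b = √(a * b) := by
  rcases hb.eq_or_lt with rfl | hb
  · simp
  · rw [← Real.sqrt_sq hb.le, ← Real.sqrt_mul' _ (sq_nonneg b), Real.sqrt_sq hb.le]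
    congr 1
    field_simp

theorem Real.sqrt_sub_inv_mul_sqrt_one_sub_inv (t : ℝ) {n : ℝ} (hn : 1 ≤ n) :
    √(t - n⁻¹) * √(1 - n⁻¹) = n⁻¹ * √((t * n - 1) * (n - 1)) := by
  have hn0 : 0 < n := by linarith
  have hsq : (t - n⁻¹) * (1 - n⁻¹) = (t * n - 1) * (n - 1) * n⁻¹ ^ 2 := by field_simp
  rw [← Real.sqrt_mul' _ (by rw [sub_nonneg]; exact inv_le_one_of_one_le₀ hn), hsq,
    Real.sqrt_mul' _ (sq_nonneg _), Real.sqrt_sq (by positivity), mul_comm]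

/-- At `n = 1` this is `√(x / 0) = 0`. -/
noncomputable def isotropicWeight (n t : ℝ) : ℝ := √((t * n - 1) / (n - 1))

section

variable {n t : ℝ} (hn : 1 ≤ n)
include hn

theorem isotropicWeight_le_one (ht : t ≤ 1) : isotropicWeight n t ≤ 1 := by
  refine Real.sqrt_le_one.mpr (div_le_one_of_le₀ ?_ (by linarith))
  nlinarith

theorem isotropicWeight_mul_sub_one : isotropicWeight n t * (n - 1) = √((t * n - 1) * (n - 1)) :=
  Real.sqrt_div_mul_self_s16 _ (by linarith)

theorem isotropicWeight_sq_mul_sub_one_le (ht : 1 ≤ t * n) :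
    isotropicWeight n t ^ 2 * (n - 1) ≤ t * n - 1 := by
  rw [isotropicWeight, Real.sq_sqrt (div_nonneg (by linarith) (by linarith))]
  rcases hn.eq_or_lt with rfl | hn
  · simpa using ht
  · rw [div_mul_cancel₀ _ (by linarith)]

end

section

variable {ι : Type*} [Fintype ι] [DecidableEq ι]

noncomputable def isotropicState (ψ : ι → ℂ) (lam : ℝ) : Matrix ι ι ℂ :=
  ((1 - lam : ℝ) : ℂ) • (((Fintype.card ι : ℝ)⁻¹ : ℝ) : ℂ) • 1 + (lam : ℂ) • vecMulVec ψ (star ψ)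

variable {ψ : ι → ℂ} {lam : ℝ}

theorem isotropicState_posSemidef (h0 : 0 ≤ lam) (h1 : lam ≤ 1) :
    (isotropicState ψ lam).PosSemidef := by
  refine .add (.smul (.smul .one ?_) ?_) (.smul (posSemidef_vecMulVec_self_star ψ) ?_) <;>
    rw [Complex.zero_le_real]
  · positivity
  · linarith
  · exact h0

variable (hψ : star ψ ⬝ᵥ ψ = 1)
include hψ

theorem trace_isotropicState [Nonempty ι] : (isotropicState ψ lam).trace = 1 := by
  have hcard : (Fintype.card ι : ℝ) ≠ 0 := Nat.cast_ne_zero.mpr Fintype.card_ne_zero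
  simp only [isotropicState, trace_add, trace_smul, trace_one, trace_vecMulVec_self_star hψ,
    smul_eq_mul]
  push_cast
  field_simp
  ring

theorem star_dotProduct_isotropicState_mulVec :
    star ψ ⬝ᵥ isotropicState ψ lam *ᵥ ψ = (((1 - lam) * (Fintype.card ι : ℝ)⁻¹ + lam : ℝ) : ℂ) := by
  rw [← trace_mul_vecMulVec_self_star]
  simp only [isotropicState, add_mul, Matrix.smul_mul, Matrix.one_mul,
    vecMulVec_self_star_mul_self hψ, trace_add, trace_smul, trace_vecMulVec_self_star hψ,
    smul_eq_mul]
  push_cast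
  ring

theorem trace_isotropicState_mul_self [Nonempty ι] :
    (isotropicState ψ lam * isotropicState ψ lam).trace
      = (((Fintype.card ι : ℝ)⁻¹ + lam ^ 2 * (1 - (Fintype.card ι : ℝ)⁻¹) : ℝ) : ℂ) := by
  have hcard : (Fintype.card ι : ℝ) ≠ 0 := Nat.cast_ne_zero.mpr Fintype.card_ne_zero
  simp only [isotropicState, add_mul, mul_add, Matrix.smul_mul, Matrix.mul_smul, Matrix.one_mul,
    Matrix.mul_one, vecMulVec_self_star_mul_self hψ, trace_add, trace_smul, trace_one,
    trace_vecMulVec_self_star hψ, smul_eq_mul]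
  push_cast
  field_simp
  ring

theorem re_star_dotProduct_isotropicState_isotropicWeight_mulVec [Nonempty ι] (t : ℝ) :
    (star ψ ⬝ᵥ isotropicState ψ (isotropicWeight (Fintype.card ι) t) *ᵥ ψ).re
      = (Fintype.card ι : ℝ)⁻¹
        * (1 + √((t * Fintype.card ι - 1) * ((Fintype.card ι : ℝ) - 1))) := by
  have hn : (1 : ℝ) ≤ Fintype.card ι := Nat.one_le_cast.mpr Fintype.card_pos
  rw [star_dotProduct_isotropicState_mulVec hψ, Complex.ofReal_re,
    ← isotropicWeight_mul_sub_one hn]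
  field_simp
  ring

theorem isGreatest_re_star_dotProduct_mulVec [Nonempty ι] {t : ℝ}
    (ht1 : (Fintype.card ι : ℝ)⁻¹ ≤ t) (ht2 : t ≤ 1) :
    IsGreatest {x : ℝ | ∃ ρ : Matrix ι ι ℂ,
        ρ.PosSemidef ∧ ρ.trace = 1 ∧ ((ρ * ρ).trace.re ≤ t) ∧ x = (star ψ ⬝ᵥ ρ *ᵥ ψ).re}
      ((Fintype.card ι : ℝ)⁻¹
        * (1 + √((t * Fintype.card ι - 1) * ((Fintype.card ι : ℝ) - 1)))) := by
  set n : ℝ := (Fintype.card ι : ℝ)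
  have hn : 1 ≤ n := Nat.one_le_cast.mpr Fintype.card_pos
  have htn : 1 ≤ t * n := by rwa [inv_le_iff_one_le_mul₀ (by positivity)] at ht1
  refine ⟨⟨isotropicState ψ (isotropicWeight n t), ?_, trace_isotropicState hψ, ?_,
    (re_star_dotProduct_isotropicState_isotropicWeight_mulVec hψ t).symm⟩, ?_⟩
  · exact isotropicState_posSemidef (Real.sqrt_nonneg _) (isotropicWeight_le_one hn ht2)
  · rw [trace_isotropicState_mul_self hψ, Complex.ofReal_re]
    have hlam := isotropicWeight_sq_mul_sub_one_le hn htn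
    calc n⁻¹ + isotropicWeight n t ^ 2 * (1 - n⁻¹)
        = n⁻¹ * (1 + isotropicWeight n t ^ 2 * (n - 1)) := by field_simp
      _ ≤ n⁻¹ * (t * n) := by gcongr; linarith
      _ = t := by field_simp
  · rintro _ ⟨ρ, hρ, htr, hpur, rfl⟩
    have h := hρ.isHermitian.re_star_dotProduct_mulVec_sub_le htr hψ
    have hsqrt : √((ρ * ρ).trace.re - n⁻¹) ≤ √(t - n⁻¹) := Real.sqrt_le_sqrt (by linarith)
    rw [mul_add, mul_one, ← Real.sqrt_sub_inv_mul_sqrt_one_sub_inv t hn]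
    nlinarith [Real.sqrt_nonneg (1 - n⁻¹)]

end

noncomputable def maximallyEntangled (d : ℕ) : Fin d × Fin d → ℂ :=
  fun x => if x.1 = x.2 then ((1 / √d : ℝ) : ℂ) else 0

theorem star_dotProduct_maximallyEntangled_self {d : ℕ} (hd : 0 < d) :
    star (maximallyEntangled d) ⬝ᵥ maximallyEntangled d = 1 := by
  have hd' : (0 : ℝ) < d := Nat.cast_pos.mpr hd
  simp only [maximallyEntangled, dotProduct, Fintype.sum_prod_type, Pi.star_apply,
    apply_ite star, star_zero, ite_mul, zero_mul, Finset.sum_ite_eq, Finset.mem_univ, if_true,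
    Complex.star_def, Complex.conj_ofReal, ← Complex.ofReal_mul, Finset.sum_const,
    Finset.card_univ, Fintype.card_fin, nsmul_eq_mul]
  rw [← Complex.ofReal_natCast, ← Complex.ofReal_mul, Complex.ofReal_eq_one]
  field_simp
  rw [Real.sq_sqrt hd'.le]

/-- For the `d`-dimensional identity channel, `O_t(I_d)`, the maximum of `⟨φ⁺|ρ|φ⁺⟩`
over bipartite density matrices `ρ` on `ℂ^d ⊗ ℂ^d` with `Tr(ρ²) ≤ t`, equals
`(1/d²)(1 + √((td² − 1)(d² − 1)))` for `1/d² ≤ t ≤ 1`, and is attained at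
`ρ* = (1−λ)·I/d² + λ·|φ⁺⟩⟨φ⁺|` with `λ = √((td²−1)/(d²−1))`. -/
theorem stmt_16 {d : ℕ} (hd : 0 < d) (t : ℝ)
    (ht1 : 1 / ((d : ℝ) ^ 2) ≤ t) (ht2 : t ≤ 1)
    (φ : Fin d × Fin d → ℂ)
    (hφ : φ = fun x : Fin d × Fin d => if x.1 = x.2 then ((1 / Real.sqrt d : ℝ) : ℂ) else 0)
    (lam : ℝ) (hlam : lam = Real.sqrt ((t * (d : ℝ) ^ 2 - 1) / ((d : ℝ) ^ 2 - 1)))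
    (ρstar : Matrix (Fin d × Fin d) (Fin d × Fin d) ℂ)
    (hρstar : ρstar = ((1 - lam : ℝ) : ℂ) • ((1 / ((d : ℝ) ^ 2) : ℝ) : ℂ) • (1 : Matrix (Fin d × Fin d) (Fin d × Fin d) ℂ)
        + ((lam : ℝ) : ℂ) • Matrix.vecMulVec φ (star φ)) :
    IsGreatest {x : ℝ | ∃ ρ : Matrix (Fin d × Fin d) (Fin d × Fin d) ℂ,
        ρ.PosSemidef ∧ ρ.trace = 1 ∧ ((ρ * ρ).trace.re ≤ t) ∧
        x = (star φ ⬝ᵥ ρ.mulVec φ).re}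
      ((1 / ((d : ℝ) ^ 2)) * (1 + Real.sqrt ((t * (d : ℝ) ^ 2 - 1) * ((d : ℝ) ^ 2 - 1)))) ∧
    (star φ ⬝ᵥ ρstar.mulVec φ).re =
      (1 / ((d : ℝ) ^ 2)) * (1 + Real.sqrt ((t * (d : ℝ) ^ 2 - 1) * ((d : ℝ) ^ 2 - 1))) := by
  have hψ : star φ ⬝ᵥ φ = 1 := hφ ▸ star_dotProduct_maximallyEntangled_self hd
  have : Nonempty (Fin d × Fin d) := ⟨(⟨0, hd⟩, ⟨0, hd⟩)⟩
  have hcard : (d : ℝ) ^ 2 = Fintype.card (Fin d × Fin d) := by simp [sq]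
  simp only [hcard, one_div] at ht1 hlam hρstar ⊢
  subst hlam hρstar
  exact ⟨isGreatest_re_star_dotProduct_mulVec hψ ht1 ht2,
    re_star_dotProduct_isotropicState_isotropicWeight_mulVec hψ t⟩
end

section
/- For d = 2 and all t with 1/d² ≤ t < 1, the strict inequality O_t(I_d ⊗ I_d) > O_t(I_d)² holds, where O_t(I_d) = (1/d²)(1 + √((td²−1)(d²−1))) and O_t(I_d ⊗ I_d) = (1/d⁴)(1 + √((td⁴−1)(d⁴−1))). -/
/-- For `d = 2` and all `t` with `1/d² ≤ t < 1`, the strict inequality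
`O_t(I_d ⊗ I_d) > O_t(I_d)²` holds, where `O_t(I_d) = (1/d²)(1 + √((td²−1)(d²−1)))`
and `O_t(I_d ⊗ I_d) = (1/d⁴)(1 + √((td⁴−1)(d⁴−1)))`; for `d = 2` this reads
`(1/16)(1 + √((16t−1)·15)) > ((1/4)(1 + √((4t−1)·3)))²`. -/
theorem stmt_17 (t : ℝ) (ht1 : 1 / 4 ≤ t) (ht2 : t < 1) :
    (1 / 16) * (1 + Real.sqrt ((16 * t - 1) * 15)) >
      ((1 / 4) * (1 + Real.sqrt ((4 * t - 1) * 3))) ^ 2 := by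
  set a := Real.sqrt ((16 * t - 1) * 15) with ha
  set b := Real.sqrt ((4 * t - 1) * 3) with hb
  have ha0 : 0 ≤ a := Real.sqrt_nonneg _
  have hb0 : 0 ≤ b := Real.sqrt_nonneg _
  have ha2 : a ^ 2 = (16 * t - 1) * 15 := Real.sq_sqrt (by nlinarith)
  have hb2 : b ^ 2 = (4 * t - 1) * 3 := Real.sq_sqrt (by nlinarith)
  have hb3 : b < 3 := by nlinarith
  have key : (3 - b) * (b ^ 3 + 7 * b ^ 2 + 5 * b + 15) > 0 := by
    have : 0 < 3 - b := by linarith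
    have h2 : 0 < b ^ 3 + 7 * b ^ 2 + 5 * b + 15 := by positivity
    exact mul_pos this h2
  -- a^2 - (12t-3+2b)^2 = (3-b)(b^3+7b^2+5b+15) using 12t-3 = b^2
  have h12 : 12 * t - 3 = b ^ 2 := by linarith [hb2]
  have hc0 : 0 ≤ 12 * t - 3 + 2 * b := by nlinarith
  have hsq : a ^ 2 > (12 * t - 3 + 2 * b) ^ 2 := by nlinarith
  have : a > 12 * t - 3 + 2 * b := by nlinarith [sq_nonneg (a - (12 * t - 3 + 2 * b))]
  nlinarith
end

section
/- Fix q ∈ R^n with Σᵢ qᵢ = 1 and 1/n < t < 1. Define v(z) ∈ R^n by v(z)ᵢ = max(0, qᵢ − z) and h(z) = √t·‖v(z)‖₂ + z for z < max_i qᵢ, h(z) = z otherwise. Then h(z) is a lower bound for the Lagrange dual function of the problem max{p·q : p ≥ 0, Σpᵢ = 1, p·p ≤ t}, and min_z h(z) equals max{p·q : p ∈ P(t)}. -/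
/-!
Weak duality is Cauchy–Schwarz: for `p ∈ P(t)`,
`p·q = p·(q − z) + z ≤ ‖p‖ ‖(q − z)⁺‖ + z ≤ √t ‖(q − z)⁺‖ + z = h(z)`, and the middle bound is
attained by `p = √t (q − z)⁺ / ‖(q − z)⁺‖`, which makes `h(z)` a lower bound of the dual function.

For strong duality, normalise `v(z) = (q − z)⁺` to the probability vector `p = v(z) / Σᵢ v(z)ᵢ`,
whose value is `‖v(z)‖² / Σᵢ v(z)ᵢ + z`. It lies in `P(t)` exactly when `‖v(z)‖ ≤ √t Σᵢ v(z)ᵢ`.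
If this holds for every `z < maxᵢ qᵢ`, the primal optimum is at least every such `z`, hence equals
`maxᵢ qᵢ = h(maxᵢ qᵢ)`. Otherwise it fails at some `z₁`, while it holds strictly for very negative
`z` because `t n > 1`; by the intermediate value theorem it is an equality at some `z₂`, and there
the value of `p` is `h(z₂)`.
-/

open Finset

noncomputable section

def excess {ι : Type*} (q : ι → ℝ) (z : ℝ) (i : ι) : ℝ := max 0 (q i - z)

variable {ι : Type*} [Fintype ι]

/-- The feasible set `P(t)`. -/
def cappedSimplex (t : ℝ) : Set (ι → ℝ) :=
  {p | (∀ i, 0 ≤ p i) ∧ ∑ i, p i = 1 ∧ ∑ i, p i * p i ≤ t}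

def dualBound (t : ℝ) (q : ι → ℝ) (z : ℝ) : ℝ := √t * √(∑ i, excess q z i ^ 2) + z

end

lemma excess_nonneg {ι : Type*} (q : ι → ℝ) (z : ℝ) (i : ι) : 0 ≤ excess q z i :=
  le_max_left _ _

lemma max_zero_mul_self_eq_sq (x : ℝ) : max 0 x * x = max 0 x ^ 2 := by
  rcases le_total x 0 with hx | hx
  · simp [max_eq_left hx]
  · rw [max_eq_right hx, sq]

section PositivePart

variable {ι : Type*} [Fintype ι]

lemma sum_mul_le_sqrt_mul_sqrt_max_zero {p : ι → ℝ} (hp : ∀ i, 0 ≤ p i) (a : ι → ℝ) :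
    ∑ i, p i * a i ≤ √(∑ i, p i ^ 2) * √(∑ i, max 0 (a i) ^ 2) :=
  (sum_le_sum fun i _ ↦ mul_le_mul_of_nonneg_left (le_max_right _ _) (hp i)).trans
    (Real.sum_mul_le_sqrt_mul_sqrt _ _ _)

lemma exists_nonneg_sum_mul_eq_sqrt_mul_sqrt (a : ι → ℝ) {t : ℝ} (ht : 0 ≤ t) :
    ∃ p : ι → ℝ, (∀ i, 0 ≤ p i) ∧ ∑ i, p i * p i ≤ t ∧
      ∑ i, p i * a i = √t * √(∑ i, max 0 (a i) ^ 2) := by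
  set N := √(∑ i, max 0 (a i) ^ 2)
  have hN : N ^ 2 = ∑ i, max 0 (a i) ^ 2 := Real.sq_sqrt (by positivity)
  -- if `N = 0` this witness is `0`, since `√t / 0 = 0`
  refine ⟨fun i ↦ √t / N * max 0 (a i), fun i ↦ by positivity, ?_, ?_⟩
  · have hsum : ∑ i, √t / N * max 0 (a i) * (√t / N * max 0 (a i)) =
        t / N ^ 2 * ∑ i, max 0 (a i) ^ 2 := by
      rw [mul_sum]
      exact sum_congr rfl fun i _ ↦ by
        linear_combination max 0 (a i) ^ 2 / N ^ 2 * Real.sq_sqrt ht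
    rw [hsum, ← hN]
    rcases eq_or_ne N 0 with h0 | h0
    · simpa [h0] using ht
    · rw [div_mul_cancel₀ _ (pow_ne_zero 2 h0)]
  · simp only [mul_assoc, ← mul_sum, max_zero_mul_self_eq_sq, ← hN]
    rcases eq_or_ne N 0 with h0 | h0
    · simp [h0]
    · field_simp

end PositivePart

namespace cappedSimplex

variable {ι : Type*} [Fintype ι]

lemma eq_stdSimplex_inter (t : ℝ) :
    cappedSimplex t = stdSimplex ℝ ι ∩ {p | ∑ i, p i * p i ≤ t} :=
  Set.ext fun _ ↦ and_assoc.symm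

lemma isCompact (t : ℝ) : IsCompact (cappedSimplex (ι := ι) t) := by
  rw [eq_stdSimplex_inter]
  exact (isCompact_stdSimplex ℝ ι).inter_right (isClosed_le (by fun_prop) continuous_const)

lemma const_inv_card_mem [Nonempty ι] {t : ℝ} (ht : 1 / (Fintype.card ι : ℝ) ≤ t) :
    (fun _ ↦ (Fintype.card ι : ℝ)⁻¹) ∈ cappedSimplex (ι := ι) t := by
  have hcard : (Fintype.card ι : ℝ) ≠ 0 := Nat.cast_ne_zero.2 Fintype.card_ne_zero
  refine ⟨fun _ ↦ by positivity, ?_, ?_⟩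
  · simp [hcard]
  · simpa [hcard] using ht

lemma exists_isGreatest_sum_mul [Nonempty ι] {t : ℝ} (ht : 1 / (Fintype.card ι : ℝ) ≤ t)
    (q : ι → ℝ) :
    ∃ m, IsGreatest ((fun p ↦ ∑ i, p i * q i) '' cappedSimplex t) m :=
  ((isCompact t).image (by fun_prop)).exists_isGreatest
    (Set.Nonempty.image _ ⟨_, const_inv_card_mem ht⟩)

end cappedSimplex

section Duality

variable {ι : Type*} [Fintype ι] {q : ι → ℝ} {t z : ℝ}

lemma sum_excess_pos {j : ι} (hz : z < q j) : 0 < ∑ i, excess q z i :=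
  (sub_pos.2 hz).trans_le <| (le_max_right _ _).trans <|
    single_le_sum (fun i _ ↦ excess_nonneg q z i) (mem_univ j)

lemma dualBound_eq_self (hz : ∀ i, q i ≤ z) : dualBound t q z = z := by
  simp [dualBound, excess, hz]

lemma sum_mul_sub_const (p q : ι → ℝ) (z : ℝ) :
    ∑ i, p i * (q i - z) = ∑ i, p i * q i - z * ∑ i, p i := by
  simp only [mul_sub, sum_sub_distrib, ← sum_mul]
  ring

lemma sum_mul_le_dualBound {p : ι → ℝ} (hp : p ∈ cappedSimplex t) (z : ℝ) :
    ∑ i, p i * q i ≤ dualBound t q z := by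
  obtain ⟨hp0, hp1, hpt⟩ := hp
  have hnorm : √(∑ i, p i ^ 2) ≤ √t := Real.sqrt_le_sqrt (by simpa [sq] using hpt)
  have := sum_mul_le_sqrt_mul_sqrt_max_zero hp0 (fun i ↦ q i - z)
  rw [sum_mul_sub_const, hp1] at this
  unfold dualBound excess
  nlinarith [Real.sqrt_nonneg (∑ i, max 0 (q i - z) ^ 2)]

lemma dualBound_le_of_lagrangian_le (ht : 0 ≤ t) {w : ℝ} (hw : 0 ≤ w) {u : ι → ℝ}
    (hu : ∀ i, 0 ≤ u i) {M : ℝ}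
    (hM : ∀ p : ι → ℝ, (∑ i, p i * q i) - w * ((∑ i, p i * p i) - t) - z * ((∑ i, p i) - 1)
      + ∑ i, u i * p i ≤ M) :
    dualBound t q z ≤ M := by
  obtain ⟨p, hp0, hpt, hval⟩ := exists_nonneg_sum_mul_eq_sqrt_mul_sqrt (fun i ↦ q i - z) ht
  rw [sum_mul_sub_const] at hval
  have hup : 0 ≤ ∑ i, u i * p i := sum_nonneg fun i _ ↦ mul_nonneg (hu i) (hp0 i)
  have := hM p
  unfold dualBound excess
  nlinarith [mul_nonneg hw (sub_nonneg.2 hpt)]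

/-- The witness is `excess q z / ∑ i, excess q z i`. -/
lemma exists_mem_cappedSimplex_sum_mul_eq (ht : 0 ≤ t) (hS : 0 < ∑ i, excess q z i)
    (hN : √(∑ i, excess q z i ^ 2) ≤ √t * ∑ i, excess q z i) :
    ∃ p ∈ cappedSimplex t,
      ∑ i, p i * q i = (∑ i, excess q z i ^ 2) / (∑ i, excess q z i) + z := by
  set S := ∑ i, excess q z i
  refine ⟨fun i ↦ excess q z i / S, ⟨fun i ↦ div_nonneg (excess_nonneg q z i) hS.le, ?_, ?_⟩, ?_⟩
  · rw [← sum_div, div_self hS.ne']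
  · have hN' : ∑ i, excess q z i ^ 2 ≤ t * S ^ 2 := by
      rw [← Real.sq_sqrt ht, ← mul_pow, ← Real.sqrt_le_sqrt_iff (by positivity),
        Real.sqrt_sq (by positivity)]
      exact hN
    simp only [← sq, div_pow, ← sum_div]
    exact (div_le_iff₀ (by positivity)).2 hN'
  · have hval : ∑ i, excess q z i * q i = ∑ i, excess q z i ^ 2 + z * S := by
      refine eq_add_of_sub_eq ?_
      rw [← sum_mul_sub_const]
      exact sum_congr rfl fun i _ ↦ max_zero_mul_self_eq_sq _
    simp only [div_mul_eq_mul_div, ← sum_div, hval]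
    field_simp

lemma le_of_sqrt_sum_sq_excess_le (ht : 0 ≤ t) (hS : 0 < ∑ i, excess q z i)
    (hN : √(∑ i, excess q z i ^ 2) ≤ √t * ∑ i, excess q z i) {m : ℝ}
    (hm : m ∈ upperBounds ((fun p ↦ ∑ i, p i * q i) '' cappedSimplex t)) :
    z ≤ m := by
  obtain ⟨p, hp, hval⟩ := exists_mem_cappedSimplex_sum_mul_eq ht hS hN
  calc z ≤ (∑ i, excess q z i ^ 2) / (∑ i, excess q z i) + z :=
        le_add_of_nonneg_left (div_nonneg (by positivity) hS.le)
    _ = ∑ i, p i * q i := hval.symm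
    _ ≤ m := hm ⟨p, hp, rfl⟩

lemma dualBound_le_of_sqrt_sum_sq_excess_eq (ht : 0 ≤ t) (hS : 0 < ∑ i, excess q z i)
    (hN : √(∑ i, excess q z i ^ 2) = √t * ∑ i, excess q z i) {m : ℝ}
    (hm : m ∈ upperBounds ((fun p ↦ ∑ i, p i * q i) '' cappedSimplex t)) :
    dualBound t q z ≤ m := by
  obtain ⟨p, hp, hval⟩ := exists_mem_cappedSimplex_sum_mul_eq ht hS hN.le
  have hsq : ∑ i, excess q z i ^ 2 = (√t * ∑ i, excess q z i) ^ 2 := by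
    rw [← hN, Real.sq_sqrt (by positivity)]
  calc dualBound t q z = (∑ i, excess q z i ^ 2) / (∑ i, excess q z i) + z := by
        rw [dualBound, hN, hsq]
        field_simp
    _ = ∑ i, p i * q i := hval.symm
    _ ≤ m := hm ⟨p, hp, rfl⟩

lemma sqrt_sum_sq_excess_lt_of_mul_lt {c : ℝ} (hc : ∀ i, q i ≤ c) (hzc : z ≤ c)
    (hq : ∑ i, q i = 1) (ht : 0 ≤ t) (hz : z * (t * Fintype.card ι - 1) < t - c) :
    √(∑ i, excess q z i ^ 2) < √t * ∑ i, excess q z i := by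
  set S := ∑ i, excess q z i
  have hsq : ∑ i, excess q z i ^ 2 ≤ (c - z) * S := by
    rw [mul_sum]
    refine sum_le_sum fun i _ ↦ ?_
    rw [sq]
    exact mul_le_mul_of_nonneg_right (max_le (by linarith) (by linarith [hc i]))
      (excess_nonneg q z i)
  have hS : 1 - Fintype.card ι * z ≤ S := calc
    1 - Fintype.card ι * z = ∑ i, (q i - z) := by simp [sum_sub_distrib, hq]
    _ ≤ S := sum_le_sum fun i _ ↦ le_max_right _ _
  have htS : c - z < t * S := by nlinarith
  have hSpos : 0 < S := by nlinarith
  calc √(∑ i, excess q z i ^ 2) < √(t * S ^ 2) := Real.sqrt_lt_sqrt (by positivity) (by nlinarith)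
    _ = √t * S := by rw [Real.sqrt_mul ht, Real.sqrt_sq hSpos.le]

lemma exists_dualBound_le [Nonempty ι] (hq : ∑ i, q i = 1) (ht : 1 < t * Fintype.card ι)
    {m : ℝ} (hm : m ∈ upperBounds ((fun p ↦ ∑ i, p i * q i) '' cappedSimplex t)) :
    ∃ z, dualBound t q z ≤ m := by
  have ht0 : 0 < t := by
    by_contra! h
    nlinarith [(Nat.cast_nonneg (Fintype.card ι) : (0 : ℝ) ≤ _)]
  obtain ⟨j, hj⟩ := Finite.exists_max q
  by_cases hcase : ∃ z₁ < q j, √t * ∑ i, excess q z₁ i < √(∑ i, excess q z₁ i ^ 2)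
  · obtain ⟨z₁, hz₁j, hz₁⟩ := hcase
    obtain ⟨z₀, hz₀₁, hz₀⟩ : ∃ z₀ < z₁, z₀ * (t * Fintype.card ι - 1) < t - q j :=
      ((Filter.eventually_lt_atBot z₁).and ((Filter.tendsto_id.atBot_mul_const
        (sub_pos.2 ht)).eventually (Filter.eventually_lt_atBot _))).exists
    have hg₀ := sqrt_sum_sq_excess_lt_of_mul_lt hj (hz₀₁.trans hz₁j).le hq ht0.le hz₀
    have hcont : Continuous fun z ↦ √t * ∑ i, excess q z i - √(∑ i, excess q z i ^ 2) := by
      unfold excess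
      fun_prop
    obtain ⟨z₂, hz₂, hg₂⟩ :=
      intermediate_value_Icc' hz₀₁.le hcont.continuousOn
        (show (0 : ℝ) ∈ Set.Icc _ _ from ⟨by linarith, by linarith⟩)
    exact ⟨z₂, dualBound_le_of_sqrt_sum_sq_excess_eq ht0.le
      (sum_excess_pos (hz₂.2.trans_lt hz₁j)) (sub_eq_zero.1 hg₂).symm hm⟩
  · push Not at hcase
    refine ⟨q j, (dualBound_eq_self hj).trans_le ?_⟩
    exact le_of_forall_lt_imp_le_of_dense fun z hz ↦
      le_of_sqrt_sum_sq_excess_le ht0.le (sum_excess_pos hz) (hcase z hz) hm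

end Duality

theorem stmt_18_general {n : ℕ} (hn : 0 < n) (t : ℝ) (ht1 : 1 / (n : ℝ) < t)
    (q : Fin n → ℝ) (hq : ∑ i, q i = 1)
    (v : ℝ → Fin n → ℝ) (hv : v = fun z i => max 0 (q i - z))
    (h : ℝ → ℝ)
    (hh : h = fun z => if z < Finset.univ.sup' (Finset.univ_nonempty_iff.mpr
        (Fin.pos_iff_nonempty.mp hn)) q
      then Real.sqrt t * Real.sqrt (∑ i, v z i ^ 2) + z else z) :
    (∀ (z w : ℝ) (u : Fin n → ℝ), (∀ i, 0 ≤ u i) → 0 ≤ w →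
      ∀ M : ℝ, (∀ p : Fin n → ℝ,
          (∑ i, p i * q i) - w * ((∑ i, p i * p i) - t) - z * ((∑ i, p i) - 1)
            + ∑ i, u i * p i ≤ M) →
        h z ≤ M) ∧
    ∃ m : ℝ, IsLeast (Set.range h) m ∧
      IsGreatest {x : ℝ | ∃ p : Fin n → ℝ,
          ((∀ i, 0 ≤ p i) ∧ ∑ i, p i = 1 ∧ ∑ i, p i * p i ≤ t) ∧
          x = ∑ i, p i * q i} m := by
  have : Nonempty (Fin n) := Fin.pos_iff_nonempty.mp hn
  have htn : 1 < t * Fintype.card (Fin n) := by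
    rw [Fintype.card_fin]
    exact (div_lt_iff₀ (Nat.cast_pos.2 hn)).1 ht1
  have ht0 : 0 ≤ t := (one_div_nonneg.2 n.cast_nonneg).trans ht1.le
  -- the `if` in `h` is harmless: `excess q z = 0` once `z ≥ maxᵢ qᵢ`
  have hh' : h = dualBound t q := by
    subst hv hh
    funext z
    split_ifs with hz
    · rfl
    · exact (dualBound_eq_self fun i ↦ (le_sup' q (mem_univ i)).trans (not_lt.1 hz)).symm
  have hset : {x : ℝ | ∃ p : Fin n → ℝ,
      ((∀ i, 0 ≤ p i) ∧ ∑ i, p i = 1 ∧ ∑ i, p i * p i ≤ t) ∧ x = ∑ i, p i * q i} =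
      (fun p ↦ ∑ i, p i * q i) '' cappedSimplex t := by
    simp only [Set.image, cappedSimplex, eq_comm]
    rfl
  subst hh'
  refine ⟨fun z w u hu hw M hM ↦ dualBound_le_of_lagrangian_le ht0 hw hu hM, ?_⟩
  rw [hset]
  obtain ⟨m, hm⟩ := cappedSimplex.exists_isGreatest_sum_mul (ht1.le.trans' (by simp)) q
  obtain ⟨z, hz⟩ := exists_dualBound_le hq htn hm.2
  obtain ⟨p, hp, rfl⟩ := hm.1
  exact ⟨_, ⟨⟨z, hz.antisymm (sum_mul_le_dualBound hp z)⟩,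
    Set.forall_mem_range.2 (sum_mul_le_dualBound hp)⟩, hm⟩

/-- Fix `q ∈ ℝⁿ` with `∑ᵢ qᵢ = 1` and `1/n < t < 1`.  With `v(z)ᵢ = max(0, qᵢ − z)` and
`h(z) = √t·‖v(z)‖₂ + z` for `z < maxᵢ qᵢ`, `h(z) = z` otherwise:
(1) `h(z)` is a lower bound for the Lagrange dual function of
`max{p·q : p ≥ 0, ∑pᵢ = 1, p·p ≤ t}`, i.e. `h z` is at most any upper bound of the
Lagrangian `p ↦ p·q − w(p·p − t) − z(∑pᵢ − 1) + u·p` for dual-feasible `u ≥ 0, w ≥ 0`;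
(2) the minimum of `h` is attained and equals `max{p·q : p ∈ P(t)}`. -/
theorem stmt_18 {n : ℕ} (hn : 0 < n) (t : ℝ) (ht1 : 1 / (n : ℝ) < t) (ht2 : t < 1)
    (q : Fin n → ℝ) (hq : ∑ i, q i = 1)
    (v : ℝ → Fin n → ℝ) (hv : v = fun z i => max 0 (q i - z))
    (h : ℝ → ℝ)
    (hh : h = fun z => if z < Finset.univ.sup' (Finset.univ_nonempty_iff.mpr
        (Fin.pos_iff_nonempty.mp hn)) q
      then Real.sqrt t * Real.sqrt (∑ i, v z i ^ 2) + z else z) :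
    (∀ (z w : ℝ) (u : Fin n → ℝ), (∀ i, 0 ≤ u i) → 0 ≤ w →
      ∀ M : ℝ, (∀ p : Fin n → ℝ,
          (∑ i, p i * q i) - w * ((∑ i, p i * p i) - t) - z * ((∑ i, p i) - 1)
            + ∑ i, u i * p i ≤ M) →
        h z ≤ M) ∧
    ∃ m : ℝ, IsLeast (Set.range h) m ∧
      IsGreatest {x : ℝ | ∃ p : Fin n → ℝ,
          ((∀ i, 0 ≤ p i) ∧ ∑ i, p i = 1 ∧ ∑ i, p i * p i ≤ t) ∧
          x = ∑ i, p i * q i} m :=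
  stmt_18_general hn t ht1 q hq v hv h hh
end

section
/- If z* minimizes h(z) = √t·‖v(z)‖₂ + z (with v(z)ᵢ = max(0, qᵢ − z)) over z < max_i qᵢ, and v(z*) ≠ 0, then p* = √t · v(z*)/‖v(z*)‖₂ lies in P(t) with p*·p* = t, and p*·q = h(z*) = max{p·q : p ∈ P(t)}. -/
/-!
Weak duality: for every `z` and every `p ∈ P(t)`, splitting `q = (q - z) + z` and bounding
`p·(q - z) ≤ p·v(z) ≤ ‖p‖₂ ‖v(z)‖₂ ≤ √t ‖v(z)‖₂` gives `p·q ≤ h(z)`. At the minimiser `z*`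
the derivative of `h` vanishes, i.e. `√t · Σᵢ v(z*)ᵢ = ‖v(z*)‖₂`; this is exactly what makes
`p*` a probability vector, and then `p*` attains the bound `h(z*)`.
-/

open Filter Set

theorem hasDerivAt_max_zero_sq (x : ℝ) :
    HasDerivAt (fun y : ℝ => max 0 y ^ 2) (2 * max 0 x) x := by
  rcases lt_trichotomy x 0 with hx | rfl | hx
  · rw [max_eq_left hx.le, mul_zero]
    refine (hasDerivAt_const x 0).congr_of_eventuallyEq ?_
    filter_upwards [Iio_mem_nhds hx] with y hy
    simp [max_eq_left (mem_Iio.mp hy).le]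
  · have hleft : HasDerivWithinAt (fun y : ℝ => max 0 y ^ 2) 0 (Iic 0) 0 :=
      (hasDerivWithinAt_const 0 _ 0).congr (fun y hy => by simp [max_eq_left (mem_Iic.mp hy)])
        (by simp)
    have hright : HasDerivWithinAt (fun y : ℝ => max 0 y ^ 2) 0 (Ici 0) 0 := by
      refine HasDerivWithinAt.congr (f := fun y : ℝ => y ^ 2) ?_
        (fun y hy => by simp [max_eq_right (mem_Ici.mp hy)]) (by simp)
      simpa using (hasDerivAt_pow 2 (0 : ℝ)).hasDerivWithinAt
    simpa using (hleft.union hright).hasDerivAt (by simp [Iic_union_Ici])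
  · rw [max_eq_right hx.le]
    refine (by simpa using hasDerivAt_pow 2 x : HasDerivAt (fun y : ℝ => y ^ 2) (2 * x) x)
      |>.congr_of_eventuallyEq ?_
    filter_upwards [Ioi_mem_nhds hx] with y hy
    simp [max_eq_right (mem_Ioi.mp hy).le]

variable {ι : Type*} [Fintype ι]

theorem hasDerivAt_sum_max_zero_sub_sq (q : ι → ℝ) (z : ℝ) :
    HasDerivAt (fun z => ∑ i, max 0 (q i - z) ^ 2) (-(2 * ∑ i, max 0 (q i - z))) z := by
  rw [Finset.mul_sum, ← Finset.sum_neg_distrib]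
  refine HasDerivAt.fun_sum fun i _ => ?_
  have := (hasDerivAt_max_zero_sq (q i - z)).comp z ((hasDerivAt_id z).const_sub (q i))
  simpa [Function.comp_def] using this

theorem mul_sum_max_zero_sub_eq_sqrt_of_isLocalMin {q : ι → ℝ} {c z : ℝ}
    (hmin : IsLocalMin (fun z => c * √(∑ i, max 0 (q i - z) ^ 2) + z) z)
    (hpos : 0 < ∑ i, max 0 (q i - z) ^ 2) :
    c * ∑ i, max 0 (q i - z) = √(∑ i, max 0 (q i - z) ^ 2) := by
  have hderiv := (((hasDerivAt_sum_max_zero_sub_sq q z).sqrt hpos.ne').const_mul c).add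
    (hasDerivAt_id z)
  have hzero := hmin.hasDerivAt_eq_zero hderiv
  have hN : √(∑ i, max 0 (q i - z) ^ 2) ≠ 0 := (Real.sqrt_pos.mpr hpos).ne'
  field_simp at hzero
  linarith

theorem sum_mul_le_sqrt_mul_sqrt_add {p q : ι → ℝ} {t : ℝ} (z : ℝ) (hp0 : ∀ i, 0 ≤ p i)
    (hp1 : ∑ i, p i = 1) (hpt : ∑ i, p i * p i ≤ t) :
    ∑ i, p i * q i ≤ √t * √(∑ i, max 0 (q i - z) ^ 2) + z := by
  have hsplit : ∑ i, p i * q i = ∑ i, p i * (q i - z) + z := by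
    simp only [mul_sub, Finset.sum_sub_distrib, ← Finset.sum_mul, hp1, one_mul, sub_add_cancel]
  have hnorm : √(∑ i, p i ^ 2) ≤ √t := Real.sqrt_le_sqrt (by simpa only [sq] using hpt)
  calc ∑ i, p i * q i = ∑ i, p i * (q i - z) + z := hsplit
    _ ≤ ∑ i, p i * max 0 (q i - z) + z := by
      gcongr with i
      · exact hp0 i
      · exact le_max_right _ _
    _ ≤ √(∑ i, p i ^ 2) * √(∑ i, max 0 (q i - z) ^ 2) + z := by
      gcongr
      exact Real.sum_mul_le_sqrt_mul_sqrt _ _ _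
    _ ≤ √t * √(∑ i, max 0 (q i - z) ^ 2) + z := by gcongr

section Normalized

variable {w : ι → ℝ} {c : ℝ}

theorem sum_mul_div_eq_one (hw : c * ∑ i, w i = √(∑ i, w i ^ 2))
    (hpos : 0 < ∑ i, w i ^ 2) :
    ∑ i, c * w i / √(∑ j, w j ^ 2) = 1 := by
  rw [← Finset.sum_div, ← Finset.mul_sum, hw, div_self (Real.sqrt_pos.mpr hpos).ne']

theorem sum_mul_div_mul_self_eq_sq (hpos : 0 < ∑ i, w i ^ 2) :
    ∑ i, c * w i / √(∑ j, w j ^ 2) * (c * w i / √(∑ j, w j ^ 2)) = c ^ 2 := by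
  simp only [div_mul_div_comm, Real.mul_self_sqrt hpos.le, ← Finset.sum_div]
  rw [div_eq_iff hpos.ne', Finset.mul_sum]
  exact Finset.sum_congr rfl fun i _ => by ring

end Normalized

theorem max_zero_sub_mul_self (a z : ℝ) :
    max 0 (a - z) * a = max 0 (a - z) ^ 2 + z * max 0 (a - z) := by
  rcases le_total (a - z) 0 with h | h
  · simp [max_eq_left h]
  · rw [max_eq_right h]; ring

theorem sum_mul_div_mul_eq_mul_sqrt_add {q : ι → ℝ} {c z : ℝ}
    (hw : c * ∑ i, max 0 (q i - z) = √(∑ i, max 0 (q i - z) ^ 2))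
    (hpos : 0 < ∑ i, max 0 (q i - z) ^ 2) :
    ∑ i, c * max 0 (q i - z) / √(∑ j, max 0 (q j - z) ^ 2) * q i
      = c * √(∑ i, max 0 (q i - z) ^ 2) + z := by
  set N := √(∑ i, max 0 (q i - z) ^ 2)
  have hN : N ≠ 0 := (Real.sqrt_pos.mpr hpos).ne'
  have hNN : N * N = ∑ i, max 0 (q i - z) ^ 2 := Real.mul_self_sqrt hpos.le
  calc ∑ i, c * max 0 (q i - z) / N * q i
      = c / N * ∑ i, max 0 (q i - z) * q i := by
        rw [Finset.mul_sum]; exact Finset.sum_congr rfl fun i _ => by ring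
    _ = c / N * (N * N) + z * ((c * ∑ i, max 0 (q i - z)) / N) := by
        simp only [max_zero_sub_mul_self, Finset.sum_add_distrib, ← Finset.mul_sum, hNN]
        ring
    _ = c * N + z := by rw [hw]; field_simp

theorem stmt_19_general {n : ℕ} (hn : 0 < n) (t : ℝ)
    (q : Fin n → ℝ)
    (v : ℝ → Fin n → ℝ) (hv : v = fun z i => max 0 (q i - z))
    (h : ℝ → ℝ)
    (hh : h = fun z => if z < Finset.univ.sup' (Finset.univ_nonempty_iff.mpr
        (Fin.pos_iff_nonempty.mp hn)) q
      then Real.sqrt t * Real.sqrt (∑ i, v z i ^ 2) + z else z)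
    (zstar : ℝ) (hmin : ∀ z : ℝ, h zstar ≤ h z)
    (hvz : v zstar ≠ 0)
    (pstar : Fin n → ℝ)
    (hpstar : pstar = fun i => Real.sqrt t * v zstar i / Real.sqrt (∑ j, v zstar j ^ 2)) :
    ((∀ i, 0 ≤ pstar i) ∧ ∑ i, pstar i = 1 ∧ ∑ i, pstar i * pstar i ≤ t) ∧
      ∑ i, pstar i * pstar i = t ∧
      ∑ i, pstar i * q i = h zstar ∧
      IsGreatest {x : ℝ | ∃ p : Fin n → ℝ,
          ((∀ i, 0 ≤ p i) ∧ ∑ i, p i = 1 ∧ ∑ i, p i * p i ≤ t) ∧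
          x = ∑ i, p i * q i}
        (∑ i, pstar i * q i) := by
  subst hv hh
  obtain ⟨i₀, hi₀⟩ := Function.ne_iff.mp hvz
  have hi₀pos : 0 < max 0 (q i₀ - zstar) := lt_of_le_of_ne (le_max_left _ _) (Ne.symm hi₀)
  have hzM : zstar < Finset.univ.sup' _ q :=
    (sub_pos.mp ((lt_max_iff.mp hi₀pos).resolve_left (lt_irrefl 0))).trans_le
      (Finset.le_sup' q (Finset.mem_univ i₀))
  have hpos : 0 < ∑ i, max 0 (q i - zstar) ^ 2 :=
    Finset.sum_pos' (fun i _ => sq_nonneg _) ⟨i₀, Finset.mem_univ _, pow_pos hi₀pos 2⟩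
  have hloc : IsLocalMin (fun z => √t * √(∑ i, max 0 (q i - z) ^ 2) + z) zstar := by
    filter_upwards [Iio_mem_nhds hzM] with z hz
    simpa only [if_pos hzM, if_pos (mem_Iio.mp hz)] using hmin z
  have hfoc := mul_sum_max_zero_sub_eq_sqrt_of_isLocalMin hloc hpos
  have ht : 0 < t := Real.sqrt_ne_zero'.mp fun h0 =>
    (Real.sqrt_pos.mpr hpos).ne' (by rw [← hfoc, h0, zero_mul])
  have hsq : ∑ i, pstar i * pstar i = t := by
    rw [hpstar, sum_mul_div_mul_self_eq_sq hpos, Real.sq_sqrt ht.le]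
  have hmem : (∀ i, 0 ≤ pstar i) ∧ ∑ i, pstar i = 1 ∧ ∑ i, pstar i * pstar i ≤ t :=
    ⟨fun i => hpstar ▸ by positivity, hpstar ▸ sum_mul_div_eq_one hfoc hpos, hsq.le⟩
  have hval : ∑ i, pstar i * q i = √t * √(∑ i, max 0 (q i - zstar) ^ 2) + zstar :=
    hpstar ▸ sum_mul_div_mul_eq_mul_sqrt_add hfoc hpos
  refine ⟨hmem, hsq, by simpa only [if_pos hzM] using hval, ⟨_, hmem, rfl⟩, ?_⟩
  rintro x ⟨p, ⟨hp0, hp1, hpt⟩, rfl⟩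
  exact hval ▸ sum_mul_le_sqrt_mul_sqrt_add zstar hp0 hp1 hpt

/-- If `z*` minimizes `h(z) = √t·‖v(z)‖₂ + z` (with `v(z)ᵢ = max(0, qᵢ − z)`, and
`h(z) = z` for `z ≥ maxᵢ qᵢ`), and `v(z*) ≠ 0`, then `p* = √t·v(z*)/‖v(z*)‖₂` lies
in `P(t)` with `p*·p* = t`, and `p*·q = h(z*) = max{p·q : p ∈ P(t)}`. -/
theorem stmt_19 {n : ℕ} (hn : 0 < n) (t : ℝ) (ht1 : 1 / (n : ℝ) < t) (ht2 : t < 1)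
    (q : Fin n → ℝ) (hq : ∑ i, q i = 1)
    (v : ℝ → Fin n → ℝ) (hv : v = fun z i => max 0 (q i - z))
    (h : ℝ → ℝ)
    (hh : h = fun z => if z < Finset.univ.sup' (Finset.univ_nonempty_iff.mpr
        (Fin.pos_iff_nonempty.mp hn)) q
      then Real.sqrt t * Real.sqrt (∑ i, v z i ^ 2) + z else z)
    (zstar : ℝ) (hmin : ∀ z : ℝ, h zstar ≤ h z)
    (hvz : v zstar ≠ 0)
    (pstar : Fin n → ℝ)
    (hpstar : pstar = fun i => Real.sqrt t * v zstar i / Real.sqrt (∑ j, v zstar j ^ 2)) :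
    ((∀ i, 0 ≤ pstar i) ∧ ∑ i, pstar i = 1 ∧ ∑ i, pstar i * pstar i ≤ t) ∧
      ∑ i, pstar i * pstar i = t ∧
      ∑ i, pstar i * q i = h zstar ∧
      IsGreatest {x : ℝ | ∃ p : Fin n → ℝ,
          ((∀ i, 0 ≤ p i) ∧ ∑ i, p i = 1 ∧ ∑ i, p i * p i ≤ t) ∧
          x = ∑ i, p i * q i}
        (∑ i, pstar i * q i) :=
  stmt_19_general hn t q v hv h hh zstar hmin hvz pstar hpstar
end
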